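/- arXiv:math-ph/0607031 — 11 statements merged into one kernel-verified Lean document; each statement's English description precedes it below -/
import Mathlib

section
/- Let W be a contraction on a Hilbert space H with minimal isometric dilation U₊ on K₊ ⊇ H, and let U' be a unitary operator on a Hilbert space H'. If Λ : H' → H is a bounded operator satisfying WΛ = ΛU', then the strong limit Λ₊ := s-lim_{n→∞} U₊ⁿ Λ U'⁻ⁿ exists, satisfies U₊Λ₊ = Λ₊U', ‖Λ₊‖ = ‖Λ‖, and P_H Λ₊ = Λ, where P_H is the orthogonal projection of K₊ onto H. -/
open scoped InnerProductSpace
open Filter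

/-- Lifting lemma. If `W Λ = Λ U'` with `W` a contraction with minimal
isometric dilation `Up` and `U'` unitary, then the strong limit
`Λ₊ = s-lim Upⁿ Λ U'⁻ⁿ` exists, satisfies `Up Λ₊ = Λ₊ U'`, `‖Λ₊‖ = ‖Λ‖` and `P_H Λ₊ = Λ`. -/
theorem lifting_lemma
    {H H' K : Type*}
    [NormedAddCommGroup H] [InnerProductSpace ℂ H] [CompleteSpace H]
    [NormedAddCommGroup H'] [InnerProductSpace ℂ H'] [CompleteSpace H']
    [NormedAddCommGroup K] [InnerProductSpace ℂ K] [CompleteSpace K]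
    (J : H →ₗᵢ[ℂ] K)                         -- embedding of H into K₊
    (W : H →L[ℂ] H) (hW : ‖W‖ ≤ 1)           -- contraction
    (Up : K →L[ℂ] K) (hUp : ∀ x, ‖Up x‖ = ‖x‖)  -- isometry
    (hdil : ∀ (n : ℕ) (h : H),
      (W ^ n) h = (ContinuousLinearMap.adjoint J.toContinuousLinearMap) ((Up ^ n) (J h)))
    (hmin : Dense (↑(Submodule.span ℂ {x : K | ∃ (n : ℕ) (h : H), x = (Up ^ n) (J h)}) : Set K))
    (U' : H' ≃ₗᵢ[ℂ] H')                      -- unitary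
    (Λ : H' →L[ℂ] H)
    (hint : ∀ x, W (Λ x) = Λ (U' x)) :
    ∃ Λp : H' →L[ℂ] K,
      (∀ x, Tendsto (fun n : ℕ => (Up ^ n) (J (Λ ((U'.symm ^ n) x)))) atTop (nhds (Λp x))) ∧
      (∀ x, Up (Λp x) = Λp (U' x)) ∧
      ‖Λp‖ = ‖Λ‖ ∧
      (∀ x, (ContinuousLinearMap.adjoint J.toContinuousLinearMap) (Λp x) = Λ x) := by
  classical
  -- the sequence
  set s : H' → ℕ → K := fun x n => (Up ^ n) (J (Λ ((U'.symm ^ n) x))) with hs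
  -- J* J = id
  have hJJ : ∀ h : H, ContinuousLinearMap.adjoint J.toContinuousLinearMap (J h) = h := by
    intro h
    apply ext_inner_right ℂ
    intro v
    rw [ContinuousLinearMap.adjoint_inner_left]
    exact J.inner_map_map h v
  -- Up^n preserves inner products and norms
  have hUp1 : ∀ a b : K, ⟪Up a, Up b⟫_ℂ = ⟪a, b⟫_ℂ := fun a b =>
    LinearIsometry.inner_map_map ⟨Up.toLinearMap, hUp⟩ a b
  have hUpn : ∀ (n : ℕ) (a b : K), ⟪(Up ^ n) a, (Up ^ n) b⟫_ℂ = ⟪a, b⟫_ℂ := by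
    intro n
    induction n with
    | zero => simp
    | succ n ih =>
      intro a b
      rw [pow_succ', ContinuousLinearMap.mul_apply, ContinuousLinearMap.mul_apply, hUp1, ih]
  have hUpnorm : ∀ (n : ℕ) (a : K), ‖(Up ^ n) a‖ = ‖a‖ := by
    intro n
    induction n with
    | zero => simp
    | succ n ih =>
      intro a
      rw [pow_succ', ContinuousLinearMap.mul_apply, hUp, ih]
  -- symm powers
  have hUs : ∀ n : ℕ, (U'.symm ^ n) = (U' ^ n).symm := by
    intro n
    rw [show U'.symm = U'⁻¹ from rfl, inv_pow]; rfl
  have hcancel : ∀ (n : ℕ) (x : H'), (U' ^ n) ((U'.symm ^ n) x) = x := by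
    intro n x
    rw [hUs]
    exact (U' ^ n).apply_symm_apply x
  have hsplit : ∀ (n k : ℕ) (x : H'),
      (U'.symm ^ (n + k)) x = (U'.symm ^ k) ((U'.symm ^ n) x) := by
    intro n k x
    rw [add_comm, pow_add]
    rfl
  -- intertwining of powers
  have hWk : ∀ (k : ℕ) (x : H'), (W ^ k) (Λ x) = Λ ((U' ^ k) x) := by
    intro k
    induction k with
    | zero => simp
    | succ k ih =>
      intro x
      rw [pow_succ, ContinuousLinearMap.mul_apply, hint, ih]
      rfl
  -- norm of the sequence
  have hsnorm : ∀ (x : H') (n : ℕ), ‖s x n‖ = ‖Λ ((U'.symm ^ n) x)‖ := by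
    intro x n
    rw [hs]
    simp only []
    rw [hUpnorm, J.norm_map]
  -- key inner product identity
  have hkey : ∀ (x : H') (n k : ℕ),
      ⟪s x (n + k), s x n⟫_ℂ = (‖Λ ((U'.symm ^ n) x)‖ : ℂ) ^ 2 := by
    intro x n k
    have h1 : s x (n + k) = (Up ^ n) ((Up ^ k) (J (Λ ((U'.symm ^ (n + k)) x)))) := by
      rw [hs]
      simp only []
      rw [pow_add, ContinuousLinearMap.mul_apply]
    rw [h1, hs]
    simp only []
    rw [hUpn]
    have h2 : (J (Λ ((U'.symm ^ n) x)) : K) =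
        J.toContinuousLinearMap (Λ ((U'.symm ^ n) x)) := rfl
    rw [h2, ← ContinuousLinearMap.adjoint_inner_left, ← hdil, hsplit n k x, hWk, hcancel,
      inner_self_eq_norm_sq_to_K]
    rfl
  -- difference of squares identity
  have hdiff : ∀ (x : H') (n k : ℕ),
      ‖s x (n + k) - s x n‖ ^ 2
        = ‖Λ ((U'.symm ^ (n + k)) x)‖ ^ 2 - ‖Λ ((U'.symm ^ n) x)‖ ^ 2 := by
    intro x n k
    rw [@norm_sub_sq ℂ, hkey, hsnorm, hsnorm]
    have : RCLike.re ((‖Λ ((U'.symm ^ n) x)‖ : ℂ) ^ 2) = ‖Λ ((U'.symm ^ n) x)‖ ^ 2 := by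
      norm_cast
    rw [this]
    ring
  -- the scalar sequence
  set a : H' → ℕ → ℝ := fun x n => ‖Λ ((U'.symm ^ n) x)‖ ^ 2 with ha
  have hamono : ∀ x, Monotone (a x) := by
    intro x
    have h : ∀ n k, a x n ≤ a x (n + k) := by
      intro n k
      have h0 := hdiff x n k
      have h1 : (0:ℝ) ≤ ‖s x (n + k) - s x n‖ ^ 2 := sq_nonneg _
      simp only [ha]
      linarith
    intro m n hmn
    have := h m (n - m)
    rwa [Nat.add_sub_cancel' hmn] at this
  have habdd : ∀ x n, a x n ≤ (‖Λ‖ * ‖x‖) ^ 2 := by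
    intro x n
    rw [ha]
    simp only []
    have h1 : ‖Λ ((U'.symm ^ n) x)‖ ≤ ‖Λ‖ * ‖(U'.symm ^ n) x‖ := Λ.le_opNorm _
    rw [(U'.symm ^ n).norm_map] at h1
    exact pow_le_pow_left₀ (norm_nonneg _) h1 2
  have haconv : ∀ x, CauchySeq (a x) := by
    intro x
    exact (tendsto_atTop_ciSup (hamono x)
      ⟨(‖Λ‖ * ‖x‖) ^ 2, by rintro r ⟨n, rfl⟩; exact habdd x n⟩).cauchySeq
  -- the vector sequence is Cauchy
  have hscauchy : ∀ x, CauchySeq (s x) := by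
    intro x
    rw [Metric.cauchySeq_iff]
    intro ε hε
    obtain ⟨N, hN⟩ := Metric.cauchySeq_iff.mp (haconv x) (ε ^ 2) (by positivity)
    refine ⟨N, fun m hm n hn => ?_⟩
    have key : ∀ p q, N ≤ p → N ≤ q → q ≤ p → dist (s x p) (s x q) < ε := by
      intro p q hp hq hqp
      have h1 : dist (s x p) (s x q) ^ 2 = a x p - a x q := by
        rw [dist_eq_norm]
        have := hdiff x q (p - q)
        rw [Nat.add_sub_cancel' hqp] at this
        rw [this]
      have h2 : a x p - a x q < ε ^ 2 := by
        have := hN p hp q hq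
        rw [Real.dist_eq] at this
        exact lt_of_le_of_lt (le_abs_self _) this
      have h3 : dist (s x p) (s x q) ^ 2 < ε ^ 2 := by rw [h1]; exact h2
      exact lt_of_pow_lt_pow_left₀ 2 hε.le h3
    rcases le_total n m with h | h
    · exact key m n hm hn h
    · rw [dist_comm]; exact key n m hn hm h
  choose L hL using fun x => cauchySeq_tendsto_of_complete (hscauchy x)
  -- linearity
  have hadd : ∀ x y, L (x + y) = L x + L y := by
    intro x y
    refine tendsto_nhds_unique (hL (x + y)) ?_
    have : s (x + y) = fun n => s x n + s y n := by
      funext n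
      rw [hs]
      simp [map_add]
    rw [this]
    exact (hL x).add (hL y)
  have hsmul : ∀ (c : ℂ) x, L (c • x) = c • L x := by
    intro c x
    refine tendsto_nhds_unique (hL (c • x)) ?_
    have : s (c • x) = fun n => c • s x n := by
      funext n
      rw [hs]
      simp [map_smul]
    rw [this]
    exact (hL x).const_smul c
  have hLbound : ∀ x, ‖L x‖ ≤ ‖Λ‖ * ‖x‖ := by
    intro x
    refine le_of_tendsto' (hL x).norm fun n => ?_
    rw [hsnorm]
    have h1 : ‖Λ ((U'.symm ^ n) x)‖ ≤ ‖Λ‖ * ‖(U'.symm ^ n) x‖ := Λ.le_opNorm _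
    rwa [(U'.symm ^ n).norm_map] at h1
  set Λp : H' →L[ℂ] K :=
    LinearMap.mkContinuous
      { toFun := L
        map_add' := hadd
        map_smul' := hsmul } ‖Λ‖ hLbound with hΛp
  have hΛpapply : ∀ x, Λp x = L x := fun x => rfl
  refine ⟨Λp, ?_, ?_, ?_, ?_⟩
  · intro x
    rw [hΛpapply]
    exact hL x
  · -- intertwining
    intro x
    rw [hΛpapply, hΛpapply]
    have h1 : Tendsto (fun n => Up (s x n)) atTop (nhds (Up (L x))) :=
      (Up.continuous.tendsto _).comp (hL x)
    have h2 : ∀ n : ℕ, Up (s x n) = s (U' x) (n + 1) := by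
      intro n
      have e2 : (U'.symm ^ (n + 1)) (U' x) = (U'.symm ^ n) x := by
        rw [pow_succ]
        show (U'.symm ^ n) (U'.symm (U' x)) = (U'.symm ^ n) x
        rw [U'.symm_apply_apply]
      simp only [hs]
      rw [e2, pow_succ', ContinuousLinearMap.mul_apply]
    have h3 : Tendsto (fun n : ℕ => s (U' x) (n + 1)) atTop (nhds (L (U' x))) :=
      (hL (U' x)).comp (tendsto_add_atTop_nat 1)
    refine tendsto_nhds_unique ?_ h3
    have : (fun n : ℕ => s (U' x) (n + 1)) = fun n => Up (s x n) := by
      funext n; rw [h2]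
    rw [this]
    exact h1
  · -- norm equality
    refine le_antisymm (LinearMap.mkContinuous_norm_le _ (norm_nonneg Λ) _) ?_
    refine Λ.opNorm_le_bound (norm_nonneg Λp) fun x => ?_
    have h1 : ‖Λ x‖ ≤ ‖L x‖ := by
      refine ge_of_tendsto' (hL x).norm fun n => ?_
      rw [hsnorm]
      have h2 : a x 0 ≤ a x n := hamono x (Nat.zero_le n)
      rw [ha] at h2
      simp only [pow_zero] at h2
      have h3 : ‖Λ ((1 : H' ≃ₗᵢ[ℂ] H') x)‖ ^ 2 ≤ ‖Λ ((U'.symm ^ n) x)‖ ^ 2 := h2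
      have h4 : ((1 : H' ≃ₗᵢ[ℂ] H') x) = x := rfl
      rw [h4] at h3
      nlinarith [norm_nonneg (Λ x), norm_nonneg (Λ ((U'.symm ^ n) x))]
    calc ‖Λ x‖ ≤ ‖L x‖ := h1
    _ = ‖Λp x‖ := by rw [hΛpapply]
    _ ≤ ‖Λp‖ * ‖x‖ := Λp.le_opNorm x
  · -- projection property
    intro x
    rw [hΛpapply]
    have h1 : Tendsto
        (fun n => ContinuousLinearMap.adjoint J.toContinuousLinearMap (s x n)) atTop
        (nhds (ContinuousLinearMap.adjoint J.toContinuousLinearMap (L x))) :=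
      ((ContinuousLinearMap.adjoint J.toContinuousLinearMap).continuous.tendsto _).comp (hL x)
    have h2 : ∀ n : ℕ,
        ContinuousLinearMap.adjoint J.toContinuousLinearMap (s x n) = Λ x := by
      intro n
      rw [hs]
      simp only []
      rw [← hdil, hWk, hcancel]
    have h3 : Tendsto
        (fun n : ℕ => ContinuousLinearMap.adjoint J.toContinuousLinearMap (s x n)) atTop
        (nhds (Λ x)) := by
      have : (fun n : ℕ => ContinuousLinearMap.adjoint J.toContinuousLinearMap (s x n))
          = fun _ => Λ x := by funext n; rw [h2]
      rw [this]
      exact tendsto_const_nhds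
    exact tendsto_nhds_unique h1 h3
end

section
/- Let W be a contraction on a Hilbert space H with minimal isometric dilation U₊ on K₊, let U' be a unitary operator on H', and let Λ ∈ L(H', H) satisfy WΛ = ΛU'. Then the range of the lifted operator Λ₊ = s-lim_{n→∞} U₊ⁿ Λ U'⁻ⁿ is contained in the residual subspace R := ⋂_{n≥0} U₊ⁿ K₊. -/
open Filter Topology

/-!
For `m ≥ n` the approximants `Upᵐ Λ U'⁻ᵐ x` lie in the range of `Upⁿ`, which is closed because
`Upⁿ` is an isometry on a complete space; hence so does their limit `Λ₊ x`.
-/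

namespace ContinuousLinearMap

theorem isometry_pow {R E : Type*} [Semiring R] [SeminormedAddCommGroup E] [Module R E]
    {T : E →L[R] E} (hT : Isometry T) (n : ℕ) : Isometry ⇑(T ^ n) := by
  induction n with
  | zero => exact isometry_id
  | succ k ih => simpa only [pow_succ, FunLike.coe_mul_eq_comp] using ih.comp hT

theorem mem_range_pow_of_tendsto {R E : Type*} [Semiring R] [TopologicalSpace E]
    [AddCommMonoid E] [Module R E] {T : E →L[R] E} {n : ℕ} (hT : IsClosed (Set.range (T ^ n)))
    {u : ℕ → E} {y : E} (hu : Tendsto (fun m ↦ (T ^ m) (u m)) atTop (𝓝 y)) :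
    y ∈ Set.range (T ^ n) :=
  hT.mem_of_tendsto hu <| (eventually_ge_atTop n).mono fun m hm ↦
    ⟨(T ^ (m - n)) (u m), by rw [← mul_apply_eq_comp, ← pow_add, Nat.add_sub_cancel' hm]⟩

end ContinuousLinearMap

theorem lifted_range_in_residual_general
    {H H' K : Type*}
    [NormedAddCommGroup H] [InnerProductSpace ℂ H]
    [NormedAddCommGroup H'] [InnerProductSpace ℂ H']
    [NormedAddCommGroup K] [InnerProductSpace ℂ K] [CompleteSpace K]
    (J : H →ₗᵢ[ℂ] K)
    (Up : K →L[ℂ] K) (hUp : ∀ x, ‖Up x‖ = ‖x‖)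
    (U' : H' ≃ₗᵢ[ℂ] H')
    (Λ : H' →L[ℂ] H)
    (Λp : H' →L[ℂ] K)
    (hΛp : ∀ x, Tendsto (fun n : ℕ => (Up ^ n) (J (Λ ((U'.symm ^ n) x)))) atTop (nhds (Λp x))) :
    ∀ (x : H') (n : ℕ), Λp x ∈ Set.range (Up ^ n) := by
  intro x n
  have hclosed : IsClosed (Set.range (Up ^ n)) :=
    (ContinuousLinearMap.isometry_pow (AddMonoidHomClass.isometry_of_norm Up hUp) n)
      |>.isClosedEmbedding.isClosed_range
  exact ContinuousLinearMap.mem_range_pow_of_tendsto hclosed (hΛp x)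

/-- The range of the lifted operator `Λ₊ = s-lim Upⁿ Λ U'⁻ⁿ` is contained in
the residual subspace `R = ⋂_{n≥0} Upⁿ K₊` of the minimal isometric dilation. -/
theorem lifted_range_in_residual
    {H H' K : Type*}
    [NormedAddCommGroup H] [InnerProductSpace ℂ H] [CompleteSpace H]
    [NormedAddCommGroup H'] [InnerProductSpace ℂ H'] [CompleteSpace H']
    [NormedAddCommGroup K] [InnerProductSpace ℂ K] [CompleteSpace K]
    (J : H →ₗᵢ[ℂ] K)
    (W : H →L[ℂ] H) (hW : ‖W‖ ≤ 1)
    (Up : K →L[ℂ] K) (hUp : ∀ x, ‖Up x‖ = ‖x‖)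
    (hdil : ∀ (n : ℕ) (h : H),
      (W ^ n) h = (ContinuousLinearMap.adjoint J.toContinuousLinearMap) ((Up ^ n) (J h)))
    (hmin : Dense (↑(Submodule.span ℂ {x : K | ∃ (n : ℕ) (h : H), x = (Up ^ n) (J h)}) : Set K))
    (U' : H' ≃ₗᵢ[ℂ] H')
    (Λ : H' →L[ℂ] H)
    (hint : ∀ x, W (Λ x) = Λ (U' x))
    (Λp : H' →L[ℂ] K)
    (hΛp : ∀ x, Tendsto (fun n : ℕ => (Up ^ n) (J (Λ ((U'.symm ^ n) x)))) atTop (nhds (Λp x))) :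
    ∀ (x : H') (n : ℕ), Λp x ∈ Set.range (Up ^ n) :=
  lifted_range_in_residual_general J Up hUp U' Λ Λp hΛp
end

section
/- Let W be a contraction on a Hilbert space H with minimal isometric dilation U₊ on K₊ and residual subspace R = ⋂_{n≥0} U₊ⁿ K₊. For a nonzero vector h ∈ H, the following are equivalent: (a) h is orthogonal to P_H R (equivalently, h ⊥ R); (b) lim_{n→∞} W*ⁿ h = 0 in norm. -/
open scoped InnerProductSpace
open Filter


section Aux
variable {H K : Type*}
    [NormedAddCommGroup H] [InnerProductSpace ℂ H] [CompleteSpace H]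
    [NormedAddCommGroup K] [InnerProductSpace ℂ K] [CompleteSpace K]

lemma aux_pow_norm (Up : K →L[ℂ] K) (hUp : ∀ x, ‖Up x‖ = ‖x‖) (n : ℕ) (x : K) :
    ‖(Up ^ n) x‖ = ‖x‖ := by
  induction n generalizing x with
  | zero => simp
  | succ n ih => rw [pow_succ, ContinuousLinearMap.mul_apply, ih (Up x), hUp]

lemma aux_pow_inner (Up : K →L[ℂ] K) (hUp : ∀ x, ‖Up x‖ = ‖x‖) (n : ℕ) (x y : K) :
    ⟪(Up ^ n) x, (Up ^ n) y⟫_ℂ = ⟪x, y⟫_ℂ := by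
  have : ∀ z, ‖(Up ^ n) z‖ = ‖z‖ := aux_pow_norm Up hUp n
  exact (LinearIsometry.inner_map_map ⟨(Up ^ n : K →L[ℂ] K).toLinearMap, this⟩ x y)

lemma aux_adjoint_pow (Up : K →L[ℂ] K) (n : ℕ) :
    ContinuousLinearMap.adjoint (Up ^ n) = (ContinuousLinearMap.adjoint Up) ^ n := by
  rw [← ContinuousLinearMap.star_eq_adjoint, ← ContinuousLinearMap.star_eq_adjoint, star_pow]

end Aux

section Inter
variable {H K : Type*}
    [NormedAddCommGroup H] [InnerProductSpace ℂ H] [CompleteSpace H]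
    [NormedAddCommGroup K] [InnerProductSpace ℂ K] [CompleteSpace K]

lemma aux_intertwine
    (J : H →ₗᵢ[ℂ] K) (W : H →L[ℂ] H)
    (Up : K →L[ℂ] K) (hUp : ∀ x, ‖Up x‖ = ‖x‖)
    (hdil : ∀ (n : ℕ) (h : H),
      (W ^ n) h = (ContinuousLinearMap.adjoint J.toContinuousLinearMap) ((Up ^ n) (J h)))
    (hmin : Dense (↑(Submodule.span ℂ {x : K | ∃ (n : ℕ) (h : H), x = (Up ^ n) (J h)}) : Set K))
    (h : H) :
    (ContinuousLinearMap.adjoint Up) (J h) = J ((ContinuousLinearMap.adjoint W) h) := by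
  set J' := J.toContinuousLinearMap with hJ'
  have hJapp : ∀ x : H, J' x = J x := fun _ => rfl
  set v : K := (ContinuousLinearMap.adjoint Up) (J h) - J ((ContinuousLinearMap.adjoint W) h)
    with hv
  -- key computation on the spanning set
  have key : ∀ y ∈ {x : K | ∃ (n : ℕ) (g : H), x = (Up ^ n) (J g)}, ⟪v, y⟫_ℂ = 0 := by
    rintro y ⟨n, g, rfl⟩
    have h1 : ⟪(ContinuousLinearMap.adjoint Up) (J h), (Up ^ n) (J g)⟫_ℂ
        = ⟪h, (W ^ (n + 1)) g⟫_ℂ := by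
      rw [ContinuousLinearMap.adjoint_inner_left]
      have : Up ((Up ^ n) (J g)) = (Up ^ (n + 1)) (J g) := by
        rw [pow_succ', ContinuousLinearMap.mul_apply]
      rw [this, hdil (n + 1) g, ← hJapp h, ContinuousLinearMap.adjoint_inner_right]
    have h2 : ⟪J ((ContinuousLinearMap.adjoint W) h), (Up ^ n) (J g)⟫_ℂ
        = ⟪h, (W ^ (n + 1)) g⟫_ℂ := by
      rw [← hJapp, ← ContinuousLinearMap.adjoint_inner_right, ← hdil n g,
        ContinuousLinearMap.adjoint_inner_left]
      congr 1
      rw [pow_succ', ContinuousLinearMap.mul_apply]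
    rw [hv, inner_sub_left, h1, h2, sub_self]
  -- extend to the span by linearity
  have hspan : ∀ y ∈ Submodule.span ℂ {x : K | ∃ (n : ℕ) (g : H), x = (Up ^ n) (J g)},
      ⟪v, y⟫_ℂ = 0 := by
    intro y hy
    induction hy using Submodule.span_induction with
    | mem x hx => exact key x hx
    | zero => simp
    | add x y _ _ hx hy => rw [inner_add_right, hx, hy, add_zero]
    | smul c x _ hx => rw [inner_smul_right, hx, mul_zero]
  -- extend to the closure and conclude
  have hker : (Submodule.span ℂ {x : K | ∃ (n : ℕ) (g : H), x = (Up ^ n) (J g)} : Set K)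
      ⊆ {y : K | ⟪v, y⟫_ℂ = 0} := fun y hy => hspan y hy
  have hclosed : IsClosed {y : K | ⟪v, y⟫_ℂ = 0} :=
    isClosed_eq (innerSL ℂ v).continuous continuous_const
  have hall : ∀ y : K, ⟪v, y⟫_ℂ = 0 := by
    intro y
    have hy : y ∈ closure {y : K | ⟪v, y⟫_ℂ = 0} := closure_mono hker (hmin y)
    rwa [hclosed.closure_eq] at hy
  have : ⟪v, v⟫_ℂ = 0 := hall v
  have : v = 0 := inner_self_eq_zero.mp this
  exact sub_eq_zero.mp this

lemma aux_intertwine_pow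
    (J : H →ₗᵢ[ℂ] K) (W : H →L[ℂ] H)
    (Up : K →L[ℂ] K) (hUp : ∀ x, ‖Up x‖ = ‖x‖)
    (hdil : ∀ (n : ℕ) (h : H),
      (W ^ n) h = (ContinuousLinearMap.adjoint J.toContinuousLinearMap) ((Up ^ n) (J h)))
    (hmin : Dense (↑(Submodule.span ℂ {x : K | ∃ (n : ℕ) (h : H), x = (Up ^ n) (J h)}) : Set K))
    (n : ℕ) (h : H) :
    ((ContinuousLinearMap.adjoint Up) ^ n) (J h)
      = J (((ContinuousLinearMap.adjoint W) ^ n) h) := by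
  induction n with
  | zero => simp
  | succ n ih =>
    rw [pow_succ', ContinuousLinearMap.mul_apply, ih,
      aux_intertwine J W Up hUp hdil hmin]
    congr 1
    rw [pow_succ', ContinuousLinearMap.mul_apply]

end Inter

/-- For a nonzero `h ∈ H`: `h ⊥ R` (the residual subspace of the minimal
isometric dilation of the contraction `W`) iff `W*ⁿ h → 0` in norm. -/
theorem orth_residual_iff_adjoint_power_tendsto_zero
    {H K : Type*}
    [NormedAddCommGroup H] [InnerProductSpace ℂ H] [CompleteSpace H]
    [NormedAddCommGroup K] [InnerProductSpace ℂ K] [CompleteSpace K]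
    (J : H →ₗᵢ[ℂ] K)
    (W : H →L[ℂ] H) (hW : ‖W‖ ≤ 1)
    (Up : K →L[ℂ] K) (hUp : ∀ x, ‖Up x‖ = ‖x‖)
    (hdil : ∀ (n : ℕ) (h : H),
      (W ^ n) h = (ContinuousLinearMap.adjoint J.toContinuousLinearMap) ((Up ^ n) (J h)))
    (hmin : Dense (↑(Submodule.span ℂ {x : K | ∃ (n : ℕ) (h : H), x = (Up ^ n) (J h)}) : Set K))
    (h : H) (hh : h ≠ 0) :
    (∀ y : K, (∀ n : ℕ, y ∈ Set.range (Up ^ n)) → ⟪J h, y⟫_ℂ = 0) ↔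
      Tendsto (fun n : ℕ => ((ContinuousLinearMap.adjoint W) ^ n) h) atTop (nhds 0) := by
  set A : K →L[ℂ] K := ContinuousLinearMap.adjoint Up with hA
  set k : K := J h with hk
  -- the key norm identity
  have hnorm : ∀ n : ℕ, ‖((ContinuousLinearMap.adjoint W) ^ n) h‖ = ‖(A ^ n) k‖ := by
    intro n
    rw [hA, hk, aux_intertwine_pow J W Up hUp hdil hmin n h, J.norm_map]
  set a : ℕ → ℝ := fun n => ‖(A ^ n) k‖ with ha
  have hanonneg : ∀ n, 0 ≤ a n := fun n => norm_nonneg _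
  -- ⟪x, (Up^d) y⟫ = ⟪(A^d) x, y⟫
  have hinner_adj : ∀ (d : ℕ) (x y : K), ⟪x, (Up ^ d) y⟫_ℂ = ⟪(A ^ d) x, y⟫_ℂ := by
    intro d x y
    rw [hA, ← aux_adjoint_pow, ContinuousLinearMap.adjoint_inner_left]
  -- the tendsto statement is equivalent to a → 0
  have hiff : Tendsto (fun n : ℕ => ((ContinuousLinearMap.adjoint W) ^ n) h) atTop (nhds 0) ↔
      Tendsto a atTop (nhds 0) := by
    rw [tendsto_zero_iff_norm_tendsto_zero]
    constructor
    · intro ht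
      refine ht.congr fun n => ?_
      exact hnorm n
    · intro ht
      refine ht.congr fun n => ?_
      exact (hnorm n).symm
  rw [hiff]
  constructor
  · -- orthogonality ⟹ a → 0
    intro hortho
    -- a is antitone
    have hAcontr : ∀ x : K, ‖A x‖ ≤ ‖x‖ := by
      intro x
      calc ‖A x‖ ≤ ‖A‖ * ‖x‖ := A.le_opNorm x
        _ ≤ 1 * ‖x‖ := by
            gcongr
            rw [hA]
            have : ‖ContinuousLinearMap.adjoint Up‖ = ‖Up‖ :=
              LinearIsometryEquiv.norm_map ContinuousLinearMap.adjoint Up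
            rw [this]
            exact Up.opNorm_le_bound zero_le_one (by intro x; rw [hUp, one_mul])
        _ = ‖x‖ := one_mul _
    have hanti : Antitone a := by
      refine antitone_nat_of_succ_le fun n => ?_
      have : (A ^ (n + 1)) k = A ((A ^ n) k) := by
        rw [pow_succ', ContinuousLinearMap.mul_apply]
      rw [ha]
      simp only
      rw [this]
      exact hAcontr _
    have hanti2 : Antitone (fun n => (a n) ^ 2) := fun m n hmn =>
      pow_le_pow_left₀ (hanonneg n) (hanti hmn) 2
    -- the squares converge to the infimum L
    have hbdd : BddBelow (Set.range fun n => (a n) ^ 2) :=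
      ⟨0, by rintro x ⟨n, rfl⟩; positivity⟩
    set L : ℝ := ⨅ n, (a n) ^ 2 with hL
    have hconv : Tendsto (fun n => (a n) ^ 2) atTop (nhds L) :=
      tendsto_atTop_ciInf hanti2 hbdd
    have hLle : ∀ n, L ≤ (a n) ^ 2 := fun n => ciInf_le hbdd n
    -- the projections p n = Up^n (A^n k)
    set p : ℕ → K := fun n => (Up ^ n) ((A ^ n) k) with hp
    -- inner products between projections
    have hpinner : ∀ {n m : ℕ}, n ≤ m → ⟪p n, p m⟫_ℂ = ((a m) ^ 2 : ℝ) := by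
      intro n m hnm
      obtain ⟨d, rfl⟩ := Nat.exists_eq_add_of_le hnm
      have h2 : (A ^ d) ((A ^ n) k) = (A ^ (n + d)) k := by
        rw [add_comm, pow_add, ContinuousLinearMap.mul_apply]
      rw [hp]
      simp only
      rw [pow_add Up n d, ContinuousLinearMap.mul_apply, aux_pow_inner Up hUp n, hinner_adj, h2,
        inner_self_eq_norm_sq_to_K]
      norm_cast
    have hpnorm : ∀ n, ‖p n‖ = a n := fun n => aux_pow_norm Up hUp n _
    -- p is Cauchy
    have hpdist : ∀ {n m : ℕ}, n ≤ m → ‖p n - p m‖ ^ 2 = (a n) ^ 2 - (a m) ^ 2 := by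
      intro n m hnm
      have := @norm_sub_sq ℂ _ _ _ _ (p n) (p m)
      rw [hpinner hnm] at this
      have hre : RCLike.re ((a m ^ 2 : ℝ) : ℂ) = a m ^ 2 := by norm_cast
      rw [this, hpnorm, hpnorm, hre]
      ring
    have hcauchy : CauchySeq p := by
      rw [Metric.cauchySeq_iff']
      intro ε hε
      -- choose N with a N ^ 2 - L < ε ^ 2
      have : ∀ᶠ n in atTop, (a n) ^ 2 - L < ε ^ 2 := by
        have : Tendsto (fun n => (a n) ^ 2 - L) atTop (nhds 0) := by
          simpa using hconv.sub (tendsto_const_nhds (x := L))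
        have := this.eventually (eventually_lt_nhds (by positivity : (0:ℝ) < ε ^ 2))
        exact this
      obtain ⟨N, hN⟩ := this.exists
      refine ⟨N, fun n hn => ?_⟩
      rw [dist_eq_norm]
      have h1 : ‖p n - p N‖ ^ 2 = (a N) ^ 2 - (a n) ^ 2 := by
        rw [← norm_neg, neg_sub]
        exact hpdist hn
      have h2 : ‖p n - p N‖ ^ 2 < ε ^ 2 := by
        rw [h1]
        have := hLle n
        linarith
      nlinarith [norm_nonneg (p n - p N)]
    obtain ⟨r, hr⟩ := cauchySeq_tendsto_of_complete hcauchy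
    -- r is in the range of every Up^n
    have hrmem : ∀ n : ℕ, r ∈ Set.range (Up ^ n) := by
      intro n
      have hclosed : IsClosed (Set.range (Up ^ n)) := by
        have hiso : Isometry ((Up ^ n : K →L[ℂ] K) : K → K) :=
          AddMonoidHomClass.isometry_of_norm _ (aux_pow_norm Up hUp n)
        exact hiso.isClosedEmbedding.isClosed_range
      refine hclosed.mem_of_tendsto hr ?_
      filter_upwards [eventually_ge_atTop n] with m hm
      obtain ⟨d, rfl⟩ := Nat.exists_eq_add_of_le hm
      have heq : p (n + d) = (Up ^ n) ((Up ^ d) ((A ^ (n + d)) k)) := by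
        show (Up ^ (n + d)) ((A ^ (n + d)) k) = _
        rw [pow_add Up n d, ContinuousLinearMap.mul_apply]
      rw [heq]
      exact ⟨_, rfl⟩
    -- hence ⟪k, r⟫ = 0, but ⟪k, r⟫ = L
    have hkr : ⟪k, r⟫_ℂ = 0 := hortho r hrmem
    have hkp : ∀ n, ⟪k, p n⟫_ℂ = ((a n) ^ 2 : ℝ) := by
      intro n
      rw [hp]
      simp only
      rw [hinner_adj, inner_self_eq_norm_sq_to_K]
      norm_cast
    have htend1 : Tendsto (fun n => ⟪k, p n⟫_ℂ) atTop (nhds 0) := by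
      rw [← hkr]
      exact Tendsto.inner tendsto_const_nhds hr
    have htend2 : Tendsto (fun n => ⟪k, p n⟫_ℂ) atTop (nhds (L : ℂ)) := by
      have : Tendsto (fun n => (((a n) ^ 2 : ℝ) : ℂ)) atTop (nhds ((L : ℝ) : ℂ)) :=
        (Complex.continuous_ofReal.tendsto _).comp hconv
      refine this.congr fun n => (hkp n).symm
    have hL0 : (L : ℂ) = 0 := tendsto_nhds_unique htend2 htend1
    have hL0' : L = 0 := by exact_mod_cast hL0
    -- a^2 → 0 hence a → 0
    have : Tendsto (fun n => (a n) ^ 2) atTop (nhds 0) := hL0' ▸ hconv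
    have hsq : Tendsto (fun n => Real.sqrt ((a n) ^ 2)) atTop (nhds (Real.sqrt 0)) :=
      (Real.continuous_sqrt.tendsto 0).comp this
    rw [Real.sqrt_zero] at hsq
    refine hsq.congr fun n => ?_
    rw [Real.sqrt_sq (hanonneg n)]
  · -- a → 0 ⟹ orthogonality
    intro ht y hy
    have key : ∀ n : ℕ, ‖⟪k, y⟫_ℂ‖ ≤ a n * ‖y‖ := by
      intro n
      obtain ⟨z, hz⟩ := hy n
      have hzy : ‖z‖ = ‖y‖ := by rw [← hz, aux_pow_norm Up hUp n]
      have hky : ⟪k, y⟫_ℂ = ⟪(A ^ n) k, z⟫_ℂ := by rw [← hz, hinner_adj]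
      rw [hky]
      calc ‖⟪(A ^ n) k, z⟫_ℂ‖ ≤ ‖(A ^ n) k‖ * ‖z‖ := norm_inner_le_norm _ _
        _ = a n * ‖y‖ := by rw [hzy]
    have hlim : Tendsto (fun n => a n * ‖y‖) atTop (nhds 0) := by
      simpa using ht.mul_const ‖y‖
    have : ‖⟪k, y⟫_ℂ‖ ≤ 0 :=
      ge_of_tendsto hlim (Eventually.of_forall fun n => key n)
    have := le_antisymm this (norm_nonneg _)
    rwa [norm_eq_zero] at this
end

section
/- Let W be a contraction on a Hilbert space H with minimal isometric dilation U₊ on K₊ and residual subspace R = ⋂_{n≥0} U₊ⁿ K₊. Then the orthogonal projection P_H restricted to R has dense range in H if and only if W is of class C_{·1}, i.e., W*ⁿ h does not converge to 0 for any nonzero h ∈ H. -/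
/-!
For an isometry `U`, the range of `U ^ n` is closed with orthogonal complement `ker (U*)ⁿ`,
so the orthogonal complement of `R = ⋂ₙ range Uⁿ` is the closure of the increasing union
`⋃ₙ ker (U*)ⁿ`; as `‖U*‖ ≤ 1`, this says `k ⊥ R` exactly when `(U*)ⁿ k → 0`.
Minimality of the dilation forces `U* J = J W*`, hence `(U*)ⁿ (J h) = J ((W*)ⁿ h)`.
Since `P_H = J*`, a vector `h` is orthogonal to `P_H R` iff `J h ⊥ R` iff `(W*)ⁿ h → 0`,
and `P_H R` is dense iff no nonzero `h` has this property.
-/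

open scoped InnerProductSpace InnerProduct
open Filter Topology

section Isometry

variable {𝕜 K : Type*} [RCLike 𝕜] [NormedAddCommGroup K] [InnerProductSpace 𝕜 K]
  {U : K →L[𝕜] K}

def residualSubspace (U : K →L[𝕜] K) : Submodule 𝕜 K :=
  ⨅ n : ℕ, (U ^ n).range

lemma mem_residualSubspace_iff {x : K} :
    x ∈ residualSubspace U ↔ ∀ n : ℕ, x ∈ Set.range (U ^ n) := by
  simp only [residualSubspace, Submodule.mem_iInf, LinearMap.mem_range,
    ContinuousLinearMap.coe_coe, Set.mem_range]

lemma ContinuousLinearMap.norm_pow_apply_of_norm_map (hU : ∀ x, ‖U x‖ = ‖x‖) (n : ℕ) (x : K) :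
    ‖(U ^ n) x‖ = ‖x‖ := by
  rw [FunLike.coe_pow_eq_iterate]
  induction n with
  | zero => rfl
  | succ n ih => rw [Function.iterate_succ_apply', hU, ih]

lemma ContinuousLinearMap.monotone_ker_pow (T : K →L[𝕜] K) :
    Monotone fun n : ℕ => (T ^ n).ker := by
  intro m n hmn x hx
  simp only [LinearMap.mem_ker, ContinuousLinearMap.coe_coe] at hx ⊢
  rw [← pow_sub_mul_pow T hmn, mul_apply_eq_comp, hx, map_zero]

variable [CompleteSpace K]

lemma ContinuousLinearMap.adjoint_pow (U : K →L[𝕜] K) (n : ℕ) : (U ^ n)† = U† ^ n := by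
  simp only [← ContinuousLinearMap.star_eq_adjoint, star_pow]

lemma ContinuousLinearMap.norm_adjoint_pow_le_one_of_norm_map (hU : ∀ x, ‖U x‖ = ‖x‖) (n : ℕ) :
    ‖U† ^ n‖ ≤ 1 := by
  rw [← U.adjoint_pow, ContinuousLinearMap.adjoint.norm_map]
  exact (U ^ n).opNorm_le_bound zero_le_one fun x => by
    rw [U.norm_pow_apply_of_norm_map hU, one_mul]

lemma ContinuousLinearMap.isClosed_range_pow_of_norm_map (hU : ∀ x, ‖U x‖ = ‖x‖) (n : ℕ) :
    IsClosed ((U ^ n).range : Set K) := by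
  rw [LinearMap.coe_range]
  exact (AddMonoidHomClass.isometry_of_norm _
    (U.norm_pow_apply_of_norm_map hU n)).isClosedEmbedding.isClosed_range

lemma orthogonal_residualSubspace (hU : ∀ x, ‖U x‖ = ‖x‖) :
    (residualSubspace U)ᗮ = (⨆ n : ℕ, (U† ^ n).ker).topologicalClosure := by
  rw [← Submodule.orthogonal_orthogonal_eq_closure, ← Submodule.iInf_orthogonal]
  congr 1
  refine iInf_congr fun n => ?_
  rw [← U.adjoint_pow, ← ContinuousLinearMap.orthogonal_range,
    Submodule.orthogonal_orthogonal_eq_closure,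
    (U.isClosed_range_pow_of_norm_map hU n).submodule_topologicalClosure_eq]

lemma tendsto_adjoint_pow_of_mem_orthogonal_residualSubspace (hU : ∀ x, ‖U x‖ = ‖x‖) {k : K}
    (hk : k ∈ (residualSubspace U)ᗮ) : Tendsto (fun n => (U† ^ n) k) atTop (𝓝 0) := by
  rw [orthogonal_residualSubspace hU, ← SetLike.mem_coe, Submodule.topologicalClosure_coe,
    Metric.mem_closure_iff] at hk
  refine Metric.tendsto_atTop.mpr fun ε hε => ?_
  obtain ⟨a, ha, hka⟩ := hk ε hε
  obtain ⟨N, haN⟩ := (Submodule.mem_iSup_of_directed _ (U†).monotone_ker_pow.directed_le).mp ha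
  refine ⟨N, fun n hn => ?_⟩
  have han : (U† ^ n) a = 0 := (U†).monotone_ker_pow hn haN
  calc dist ((U† ^ n) k) 0 = ‖(U† ^ n) (k - a)‖ := by rw [dist_zero_right, map_sub, han, sub_zero]
    _ ≤ ‖U† ^ n‖ * ‖k - a‖ := (U† ^ n).le_opNorm _
    _ ≤ 1 * ‖k - a‖ := by gcongr; exact U.norm_adjoint_pow_le_one_of_norm_map hU n
    _ < ε := by rwa [one_mul, ← dist_eq_norm]

lemma inner_eq_zero_of_tendsto_adjoint_pow (hU : ∀ x, ‖U x‖ = ‖x‖) {r k : K}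
    (hr : r ∈ residualSubspace U) (hk : Tendsto (fun n => (U† ^ n) k) atTop (𝓝 0)) :
    ⟪r, k⟫_𝕜 = 0 := by
  have hbound : ∀ n : ℕ, ‖⟪r, k⟫_𝕜‖ ≤ ‖r‖ * ‖(U† ^ n) k‖ := fun n => by
    obtain ⟨s, rfl⟩ := mem_residualSubspace_iff.mp hr n
    rw [← ContinuousLinearMap.adjoint_inner_right, U.norm_pow_apply_of_norm_map hU, U.adjoint_pow]
    exact norm_inner_le_norm _ _
  have hlim : Tendsto (fun n => ‖r‖ * ‖(U† ^ n) k‖) atTop (𝓝 0) := by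
    simpa using (tendsto_zero_iff_norm_tendsto_zero.mp hk).const_mul ‖r‖
  exact norm_le_zero_iff.mp (ge_of_tendsto' hlim hbound)

theorem mem_orthogonal_residualSubspace_iff (hU : ∀ x, ‖U x‖ = ‖x‖) {k : K} :
    k ∈ (residualSubspace U)ᗮ ↔ Tendsto (fun n => (U† ^ n) k) atTop (𝓝 0) :=
  ⟨tendsto_adjoint_pow_of_mem_orthogonal_residualSubspace hU, fun hk _ hr =>
    inner_eq_zero_of_tendsto_adjoint_pow hU hr hk⟩

end Isometry

lemma Submodule.mem_orthogonal_map_iff {𝕜 E F : Type*} [RCLike 𝕜]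
    [NormedAddCommGroup E] [InnerProductSpace 𝕜 E] [CompleteSpace E]
    [NormedAddCommGroup F] [InnerProductSpace 𝕜 F] [CompleteSpace F]
    (R : Submodule 𝕜 F) (T : F →L[𝕜] E) {v : E} :
    v ∈ (R.map (T : F →ₗ[𝕜] E))ᗮ ↔ (T†) v ∈ Rᗮ := by
  simp only [Submodule.mem_orthogonal, Submodule.mem_map, ContinuousLinearMap.coe_coe,
    forall_exists_index, and_imp, forall_apply_eq_imp_iff₂, ContinuousLinearMap.adjoint_inner_right]

section Dilation

variable {𝕜 H K : Type*} [RCLike 𝕜]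
  [NormedAddCommGroup H] [InnerProductSpace 𝕜 H] [CompleteSpace H]
  [NormedAddCommGroup K] [InnerProductSpace 𝕜 K] [CompleteSpace K]
  {J : H →ₗᵢ[𝕜] K} {W : H →L[𝕜] H} {U : K →L[𝕜] K}

lemma semiconj_adjoint_of_minimal_dilation
    (hdil : ∀ (n : ℕ) (h : H), (W ^ n) h = (J.toContinuousLinearMap†) ((U ^ n) (J h)))
    (hmin : Dense (↑(Submodule.span 𝕜 {x : K | ∃ (n : ℕ) (h : H), x = (U ^ n) (J h)}) : Set K)) :
    Function.Semiconj J (W†) (U†) := by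
  intro g
  suffices innerSL 𝕜 (J ((W†) g)) = innerSL 𝕜 ((U†) (J g)) from
    ext_inner_right 𝕜 fun v => congrArg (· v) this
  refine ContinuousLinearMap.ext_on hmin ?_
  rintro _ ⟨m, u, rfl⟩
  simp only [innerSL_apply_apply]
  calc ⟪J ((W†) g), (U ^ m) (J u)⟫_𝕜 = ⟪(W†) g, (W ^ m) u⟫_𝕜 := by
        rw [hdil, ContinuousLinearMap.adjoint_inner_right]; rfl
    _ = ⟪g, (W ^ (m + 1)) u⟫_𝕜 := by
        rw [ContinuousLinearMap.adjoint_inner_left, pow_succ', mul_apply_eq_comp]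
    _ = ⟪J g, (U ^ (m + 1)) (J u)⟫_𝕜 := by
        rw [hdil, ContinuousLinearMap.adjoint_inner_right]; rfl
    _ = ⟪(U†) (J g), (U ^ m) (J u)⟫_𝕜 := by
        rw [ContinuousLinearMap.adjoint_inner_left, pow_succ', mul_apply_eq_comp]

lemma adjoint_pow_apply_of_minimal_dilation
    (hdil : ∀ (n : ℕ) (h : H), (W ^ n) h = (J.toContinuousLinearMap†) ((U ^ n) (J h)))
    (hmin : Dense (↑(Submodule.span 𝕜 {x : K | ∃ (n : ℕ) (h : H), x = (U ^ n) (J h)}) : Set K))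
    (n : ℕ) (h : H) : (U† ^ n) (J h) = J ((W† ^ n) h) := by
  simp only [FunLike.coe_pow_eq_iterate]
  exact ((semiconj_adjoint_of_minimal_dilation hdil hmin).iterate_right n h).symm

end Dilation

theorem dense_projection_residual_iff_C1_general
    {H K : Type*}
    [NormedAddCommGroup H] [InnerProductSpace ℂ H] [CompleteSpace H]
    [NormedAddCommGroup K] [InnerProductSpace ℂ K] [CompleteSpace K]
    (J : H →ₗᵢ[ℂ] K)
    (W : H →L[ℂ] H)
    (Up : K →L[ℂ] K) (hUp : ∀ x, ‖Up x‖ = ‖x‖)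
    (hdil : ∀ (n : ℕ) (h : H),
      (W ^ n) h = (ContinuousLinearMap.adjoint J.toContinuousLinearMap) ((Up ^ n) (J h)))
    (hmin : Dense (↑(Submodule.span ℂ {x : K | ∃ (n : ℕ) (h : H), x = (Up ^ n) (J h)}) : Set K)) :
    Dense ((ContinuousLinearMap.adjoint J.toContinuousLinearMap) ''
        {y : K | ∀ n : ℕ, y ∈ Set.range (Up ^ n)}) ↔
      (∀ h : H, h ≠ 0 →
        ¬ Tendsto (fun n : ℕ => ((ContinuousLinearMap.adjoint W) ^ n) h) atTop (nhds 0)) := by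
  have himage : J.toContinuousLinearMap† '' {y : K | ∀ n : ℕ, y ∈ Set.range (Up ^ n)} =
      ((residualSubspace Up).map (J.toContinuousLinearMap† : K →ₗ[ℂ] H) : Set H) := by
    ext; simp [mem_residualSubspace_iff]
  have hJ : ∀ f : ℕ → H, Tendsto (J ∘ f) atTop (𝓝 0) ↔ Tendsto f atTop (𝓝 0) := fun f => by
    rw [J.isometry.isEmbedding.isInducing.tendsto_nhds_iff, map_zero]
  rw [himage, Submodule.dense_iff_topologicalClosure_eq_top,
    Submodule.topologicalClosure_eq_top_iff, Submodule.eq_bot_iff]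
  refine forall_congr' fun h => ?_
  rw [Submodule.mem_orthogonal_map_iff, ContinuousLinearMap.adjoint_adjoint,
    LinearIsometry.coe_toContinuousLinearMap, mem_orthogonal_residualSubspace_iff hUp]
  simp only [adjoint_pow_apply_of_minimal_dilation hdil hmin, ← hJ]
  exact not_imp_not.symm

/-- `P_H` restricted to the residual subspace `R = ⋂_{n≥0} Upⁿ K₊` has dense
range in `H` iff the contraction `W` is of class `C_{·1}`. -/
theorem dense_projection_residual_iff_C1
    {H K : Type*}
    [NormedAddCommGroup H] [InnerProductSpace ℂ H] [CompleteSpace H]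
    [NormedAddCommGroup K] [InnerProductSpace ℂ K] [CompleteSpace K]
    (J : H →ₗᵢ[ℂ] K)
    (W : H →L[ℂ] H) (hW : ‖W‖ ≤ 1)
    (Up : K →L[ℂ] K) (hUp : ∀ x, ‖Up x‖ = ‖x‖)
    (hdil : ∀ (n : ℕ) (h : H),
      (W ^ n) h = (ContinuousLinearMap.adjoint J.toContinuousLinearMap) ((Up ^ n) (J h)))
    (hmin : Dense (↑(Submodule.span ℂ {x : K | ∃ (n : ℕ) (h : H), x = (Up ^ n) (J h)}) : Set K)) :
    Dense ((ContinuousLinearMap.adjoint J.toContinuousLinearMap) ''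
        {y : K | ∀ n : ℕ, y ∈ Set.range (Up ^ n)}) ↔
      (∀ h : H, h ≠ 0 →
        ¬ Tendsto (fun n : ℕ => ((ContinuousLinearMap.adjoint W) ^ n) h) atTop (nhds 0)) :=
  dense_projection_residual_iff_C1_general J W Up hUp hdil hmin
end

section
/- Let W be a contraction on a Hilbert space H with Ker W = {0}, with minimal unitary dilation U on K ⊇ H. Let L := closure((U − W)H) ⊆ K (viewing W as P_H U|_H) and let R := K ⊖ M(L*) be the residual subspace, where L* := closure((U* − W*)H). Then R ∩ M₊(L) = {0}, where M₊(L) = ⊕_{n≥0} UⁿL. -/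
open scoped InnerProductSpace

/-!
For `x ∈ R ⊓ M₊(L)` put `p n = P_H Uⁿ x`, where `P_H` is the adjoint of the embedding `J`.
Orthogonality of `x` to every `UⁿL*` gives `W (p n) = p (n + 1)`, and `M₊(L) ⊥ H` (a consequence
of the dilation identity) gives `p 0 = 0`. Since `W` is injective, `p n = 0` for all `n ∈ ℤ`,
i.e. `x ⊥ UⁿH` for all `n`, and minimality of the dilation forces `x = 0`.
-/

namespace UnitaryDilation

variable {𝕜 H K : Type*} [RCLike 𝕜] [NormedAddCommGroup H] [InnerProductSpace 𝕜 H]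
  [NormedAddCommGroup K] [InnerProductSpace 𝕜 K]

lemma inner_zpow_apply_left (U : K ≃ₗᵢ[𝕜] K) (n : ℤ) (s x : K) :
    ⟪(U ^ n) s, x⟫_𝕜 = ⟪s, (U ^ (-n)) x⟫_𝕜 := by
  rw [← (U ^ n).inner_map_map s, zpow_neg, LinearIsometryEquiv.coe_inv,
    LinearIsometryEquiv.apply_symm_apply]

lemma inner_zpow_eq_zero_of_mem_orthogonal_iSup {U : K ≃ₗᵢ[𝕜] K} {S : Submodule 𝕜 K} {x : K}
    (hx : x ∈ (⨆ n : ℤ, S.map ((U ^ n).toLinearEquiv : K →ₗ[𝕜] K)).topologicalClosureᗮ)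
    (n : ℤ) {s : K} (hs : s ∈ S) : ⟪s, (U ^ n) x⟫_𝕜 = 0 := by
  rw [Submodule.orthogonal_closure] at hx
  have := Submodule.inner_right_of_mem_orthogonal
    (Submodule.mem_iSup_of_mem (-n) (Submodule.mem_map_of_mem hs)) hx
  rwa [LinearEquiv.coe_coe, LinearIsometryEquiv.coe_toLinearEquiv, inner_zpow_apply_left,
    neg_neg] at this

variable [CompleteSpace H] [CompleteSpace K] {J : H →ₗᵢ[𝕜] K} {W : H →L[𝕜] H} {U : K ≃ₗᵢ[𝕜] K}

lemma apply_adjoint_apply_of_forall_inner_eq_zero {y : K}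
    (hy : ∀ h, ⟪U.symm (J h) - J (W.adjoint h), y⟫_𝕜 = 0) :
    W (J.toContinuousLinearMap.adjoint y) = J.toContinuousLinearMap.adjoint (U y) := by
  refine ext_inner_left 𝕜 fun h => ?_
  have hU : ⟪J h, U y⟫_𝕜 = ⟪U.symm (J h), y⟫_𝕜 := by
    rw [← U.symm.inner_map_map, U.symm_apply_apply]
  rw [← ContinuousLinearMap.adjoint_inner_left, ContinuousLinearMap.adjoint_inner_right,
    ContinuousLinearMap.adjoint_inner_right, LinearIsometry.coe_toContinuousLinearMap, hU]
  have hyh := hy h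
  rw [inner_sub_left, sub_eq_zero] at hyh
  exact hyh.symm

lemma adjoint_apply_zpow_apply_sub_eq_zero
    (hdil : ∀ (n : ℕ) (h : H), (W ^ n) h = J.toContinuousLinearMap.adjoint ((U ^ (n : ℤ)) (J h)))
    (n : ℕ) (g : H) : J.toContinuousLinearMap.adjoint ((U ^ (n : ℤ)) (U (J g) - J (W g))) = 0 := by
  have hshift : (U ^ (n : ℤ)) (U (J g)) = (U ^ ((n + 1 : ℕ) : ℤ)) (J g) := by
    rw [Nat.cast_succ, zpow_add_one, LinearIsometryEquiv.coe_mul, Function.comp_apply]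
  rw [map_sub, map_sub, hshift, ← hdil, ← hdil, pow_succ, mul_apply_eq_comp, sub_self]

lemma adjoint_apply_eq_zero_of_mem_closure_iSup
    (hdil : ∀ (n : ℕ) (h : H), (W ^ n) h = J.toContinuousLinearMap.adjoint ((U ^ (n : ℤ)) (J h)))
    {x : K} (hx : x ∈ (⨆ n : ℕ, Submodule.map ((U ^ (n : ℤ)).toLinearEquiv : K →ₗ[𝕜] K)
      (Submodule.span 𝕜 {x : K | ∃ h : H, x = U (J h) - J (W h)}).topologicalClosure
      ).topologicalClosure) :
    J.toContinuousLinearMap.adjoint x = 0 := by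
  set P := J.toContinuousLinearMap.adjoint
  refine (Submodule.topologicalClosure_minimal _ (iSup_le fun n => ?_) P.isClosed_ker) hx
  rw [Submodule.map_le_iff_le_comap]
  refine Submodule.topologicalClosure_minimal _ ?_
    (P.isClosed_ker.preimage (U ^ (n : ℤ)).continuous)
  rw [Submodule.span_le]
  rintro _ ⟨g, rfl⟩
  exact adjoint_apply_zpow_apply_sub_eq_zero hdil n g

lemma eq_zero_of_injective_of_apply_eq_succ {α : Type*} [Zero α] {f : α → α}
    (hf : Function.Injective f) (hf0 : f 0 = 0) {p : ℤ → α} (hp : ∀ n, f (p n) = p (n + 1))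
    (hp0 : p 0 = 0) (n : ℤ) : p n = 0 := by
  induction n using Int.induction_on with
  | zero => exact hp0
  | succ k ih => rw [← hp, ih, hf0]
  | pred k ih => exact hf (by rw [hp, sub_add_cancel, ih, hf0])

lemma eq_zero_of_forall_adjoint_apply_zpow_eq_zero
    (hmin : Dense (Submodule.span 𝕜 {x : K | ∃ (n : ℤ) (h : H), x = (U ^ n) (J h)} : Set K))
    {x : K} (hx : ∀ n : ℤ, J.toContinuousLinearMap.adjoint ((U ^ n) x) = 0) : x = 0 := by
  have hspan : Submodule.span 𝕜 {x : K | ∃ (n : ℤ) (h : H), x = (U ^ n) (J h)} ≤ (𝕜 ∙ x)ᗮ := by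
    rw [Submodule.span_le]
    rintro _ ⟨n, h, rfl⟩
    rw [SetLike.mem_coe, Submodule.mem_orthogonal_singleton_iff_inner_left, inner_zpow_apply_left,
      ← LinearIsometry.coe_toContinuousLinearMap, ← ContinuousLinearMap.adjoint_inner_right,
      hx, inner_zero_right]
  exact (hmin.mono hspan).eq_zero_of_inner_right 𝕜 fun v hv =>
    Submodule.mem_orthogonal_singleton_iff_inner_left.mp hv

end UnitaryDilation

open UnitaryDilation

theorem residual_inter_Mplus_eq_bot_general
    {H K : Type*}
    [NormedAddCommGroup H] [InnerProductSpace ℂ H] [CompleteSpace H]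
    [NormedAddCommGroup K] [InnerProductSpace ℂ K] [CompleteSpace K]
    (J : H →ₗᵢ[ℂ] K)
    (W : H →L[ℂ] H) (hker : LinearMap.ker (W : H →ₗ[ℂ] H) = ⊥)
    (U : K ≃ₗᵢ[ℂ] K)
    (hdil : ∀ (n : ℕ) (h : H),
      (W ^ n) h = (ContinuousLinearMap.adjoint J.toContinuousLinearMap) ((U ^ (n : ℤ)) (J h)))
    (hmin : Dense (↑(Submodule.span ℂ {x : K | ∃ (n : ℤ) (h : H), x = (U ^ n) (J h)}) : Set K))
    (Ls Lstar MLstar R MpL : Submodule ℂ K)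
    (hLs : Ls = (Submodule.span ℂ {x : K | ∃ h : H, x = U (J h) - J (W h)}).topologicalClosure)
    (hLstar : Lstar = (Submodule.span ℂ
      {x : K | ∃ h : H, x = U.symm (J h) - J ((ContinuousLinearMap.adjoint W) h)}).topologicalClosure)
    (hMLstar : MLstar = (⨆ n : ℤ,
      Submodule.map ((U ^ n).toLinearEquiv : K →ₗ[ℂ] K) Lstar).topologicalClosure)
    (hR : R = MLstarᗮ)
    (hMpL : MpL = (⨆ n : ℕ,
      Submodule.map ((U ^ (n : ℤ)).toLinearEquiv : K →ₗ[ℂ] K) Ls).topologicalClosure) :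
    R ⊓ MpL = ⊥ := by
  subst hLs hLstar hMLstar hR hMpL
  refine eq_bot_iff.mpr fun x hx => (Submodule.mem_bot ℂ).mpr ?_
  obtain ⟨hxR, hxM⟩ := Submodule.mem_inf.mp hx
  have hrec : ∀ n : ℤ, W (J.toContinuousLinearMap.adjoint ((U ^ n) x)) =
      J.toContinuousLinearMap.adjoint ((U ^ (n + 1)) x) := fun n => by
    rw [add_comm, zpow_one_add, LinearIsometryEquiv.coe_mul, Function.comp_apply]
    exact apply_adjoint_apply_of_forall_inner_eq_zero fun h =>
      inner_zpow_eq_zero_of_mem_orthogonal_iSup hxR n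
        (Submodule.le_topologicalClosure _ (Submodule.subset_span ⟨h, rfl⟩))
  have hp0 : J.toContinuousLinearMap.adjoint ((U ^ (0 : ℤ)) x) = 0 := by
    rw [zpow_zero]
    exact adjoint_apply_eq_zero_of_mem_closure_iSup hdil hxM
  exact eq_zero_of_forall_adjoint_apply_zpow_eq_zero hmin
    (eq_zero_of_injective_of_apply_eq_succ (LinearMap.ker_eq_bot.mp hker) (map_zero W) hrec hp0)

/-- For a contraction `W` with trivial kernel and minimal unitary dilation `U`,
with wandering subspaces `L = closure((U−W)H)` and `L* = closure((U*−W*)H)`, the residual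
subspace `R = K ⊖ M(L*)` satisfies `R ∩ M₊(L) = {0}`. -/
theorem residual_inter_Mplus_eq_bot
    {H K : Type*}
    [NormedAddCommGroup H] [InnerProductSpace ℂ H] [CompleteSpace H]
    [NormedAddCommGroup K] [InnerProductSpace ℂ K] [CompleteSpace K]
    (J : H →ₗᵢ[ℂ] K)
    (W : H →L[ℂ] H) (hW : ‖W‖ ≤ 1) (hker : LinearMap.ker (W : H →ₗ[ℂ] H) = ⊥)
    (U : K ≃ₗᵢ[ℂ] K)
    (hdil : ∀ (n : ℕ) (h : H),
      (W ^ n) h = (ContinuousLinearMap.adjoint J.toContinuousLinearMap) ((U ^ (n : ℤ)) (J h)))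
    (hmin : Dense (↑(Submodule.span ℂ {x : K | ∃ (n : ℤ) (h : H), x = (U ^ n) (J h)}) : Set K))
    (Ls Lstar MLstar R MpL : Submodule ℂ K)
    (hLs : Ls = (Submodule.span ℂ {x : K | ∃ h : H, x = U (J h) - J (W h)}).topologicalClosure)
    (hLstar : Lstar = (Submodule.span ℂ
      {x : K | ∃ h : H, x = U.symm (J h) - J ((ContinuousLinearMap.adjoint W) h)}).topologicalClosure)
    (hMLstar : MLstar = (⨆ n : ℤ,
      Submodule.map ((U ^ n).toLinearEquiv : K →ₗ[ℂ] K) Lstar).topologicalClosure)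
    (hR : R = MLstarᗮ)
    (hMpL : MpL = (⨆ n : ℕ,
      Submodule.map ((U ^ (n : ℤ)).toLinearEquiv : K →ₗ[ℂ] K) Ls).topologicalClosure) :
    R ⊓ MpL = ⊥ :=
  residual_inter_Mplus_eq_bot_general J W hker U hdil hmin Ls Lstar MLstar R MpL hLs hLstar hMLstar
    hR hMpL
end

section
/- Let W be a contraction on a Hilbert space H with Ker W = {0}. If W has a unitary quasi-affine transform (a unitary U' on some Hilbert space H' and a quasi-affinity Λ : H' → H with WΛ = ΛU'), then W is of class C_{·1}: for every nonzero h ∈ H, W*ⁿ h does not converge to 0. -/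
/-!
Fix `x ∈ H'`. Since `U'` is invertible, `Λ x = Wⁿ (Λ (U'⁻ⁿ x))` for every `n`, and the vectors
`Λ (U'⁻ⁿ x)` all have norm at most `‖Λ‖ ‖x‖`. Hence `⟪h, Λ x⟫ = ⟪W*ⁿ h, Λ (U'⁻ⁿ x)⟫`, which tends
to `0` if `W*ⁿ h → 0`. So such an `h` is orthogonal to the dense range of `Λ`, i.e. `h = 0`.
-/

open scoped InnerProductSpace
open Filter Topology

section

variable {𝕜 H : Type*} [RCLike 𝕜] [NormedAddCommGroup H] [InnerProductSpace 𝕜 H] [CompleteSpace H]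

theorem ContinuousLinearMap.adjoint_pow_s8 (A : H →L[𝕜] H) (n : ℕ) :
    ContinuousLinearMap.adjoint A ^ n = ContinuousLinearMap.adjoint (A ^ n) := by
  simp only [← ContinuousLinearMap.star_eq_adjoint, star_pow]

theorem inner_eq_zero_of_tendsto_adjoint_pow_of_bounded_preimages {A : H →L[𝕜] H} {h y : H}
    (hh : Tendsto (fun n : ℕ => (ContinuousLinearMap.adjoint A ^ n) h) atTop (𝓝 0))
    {z : ℕ → H} {C : ℝ} (hz : ∀ n, ‖z n‖ ≤ C) (hy : ∀ n, (A ^ n) (z n) = y) :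
    ⟪h, y⟫_𝕜 = 0 := by
  have hconst : ∀ n, ⟪(ContinuousLinearMap.adjoint A ^ n) h, z n⟫_𝕜 = ⟪h, y⟫_𝕜 := fun n => by
    rw [ContinuousLinearMap.adjoint_pow_s8, ContinuousLinearMap.adjoint_inner_left, hy]
  have hbound : ∀ n, ‖⟪(ContinuousLinearMap.adjoint A ^ n) h, z n⟫_𝕜‖
      ≤ ‖(ContinuousLinearMap.adjoint A ^ n) h‖ * C := fun n =>
    (norm_inner_le_norm _ _).trans (mul_le_mul_of_nonneg_left (hz n) (norm_nonneg _))
  have hlim : Tendsto (fun n => ⟪(ContinuousLinearMap.adjoint A ^ n) h, z n⟫_𝕜) atTop (𝓝 0) :=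
    squeeze_zero_norm hbound (by simpa using hh.norm.mul_const C)
  simp only [hconst] at hlim
  exact tendsto_const_nhds_iff.mp hlim

theorem apply_pow_apply_symm_iterate_of_semiconj {E F : Type*} [NormedAddCommGroup E]
    [NormedSpace 𝕜 E] [NormedAddCommGroup F] [NormedSpace 𝕜 F]
    {W : F →L[𝕜] F} {U : E ≃ₗᵢ[𝕜] E} {Λ : E →L[𝕜] F} (hint : ∀ x, W (Λ x) = Λ (U x))
    (n : ℕ) (x : E) : (W ^ n) (Λ (U.symm^[n] x)) = Λ x := by
  have hsemiconj : Function.Semiconj Λ U W := fun x => (hint x).symm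
  rw [FunLike.coe_pow_eq_iterate, ← hsemiconj.iterate_right n,
    (Function.RightInverse.iterate (fun x => U.apply_symm_apply x) n) x]

end

theorem unitary_quasi_affine_transform_implies_C1_general
    {H H' : Type*}
    [NormedAddCommGroup H] [InnerProductSpace ℂ H] [CompleteSpace H]
    [NormedAddCommGroup H'] [InnerProductSpace ℂ H']
    (W : H →L[ℂ] H)
    (U' : H' ≃ₗᵢ[ℂ] H')
    (Λ : H' →L[ℂ] H)
    (hΛdense : Dense (Set.range Λ))
    (hint : ∀ x, W (Λ x) = Λ (U' x)) :
    ∀ h : H, h ≠ 0 →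
      ¬ Tendsto (fun n : ℕ => ((ContinuousLinearMap.adjoint W) ^ n) h) atTop (nhds 0) := by
  intro h hne hlim
  refine hne (DenseRange.eq_zero_of_inner_left ℂ hΛdense fun x => ?_)
  refine inner_eq_zero_of_tendsto_adjoint_pow_of_bounded_preimages hlim
    (z := fun n => Λ (U'.symm^[n] x)) (C := ‖Λ‖ * ‖x‖) (fun n => ?_)
    (apply_pow_apply_symm_iterate_of_semiconj hint · x)
  have hnorm : ‖U'.symm^[n] x‖ = ‖x‖ := by
    rw [← U'.symm.coe_toLinearIsometry, ← LinearIsometry.coe_pow, LinearIsometry.norm_map]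
  exact hnorm ▸ Λ.le_opNorm _

/-- If a contraction `W` with trivial kernel has a unitary quasi-affine
transform, then `W` is of class `C_{·1}`: `W*ⁿ h ↛ 0` for every nonzero `h`. -/
theorem unitary_quasi_affine_transform_implies_C1
    {H H' : Type*}
    [NormedAddCommGroup H] [InnerProductSpace ℂ H] [CompleteSpace H]
    [NormedAddCommGroup H'] [InnerProductSpace ℂ H'] [CompleteSpace H']
    (W : H →L[ℂ] H) (hW : ‖W‖ ≤ 1) (hker : LinearMap.ker (W : H →ₗ[ℂ] H) = ⊥)
    (U' : H' ≃ₗᵢ[ℂ] H')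
    (Λ : H' →L[ℂ] H)
    (hΛinj : Function.Injective Λ) (hΛdense : Dense (Set.range Λ))
    (hint : ∀ x, W (Λ x) = Λ (U' x)) :
    ∀ h : H, h ≠ 0 →
      ¬ Tendsto (fun n : ℕ => ((ContinuousLinearMap.adjoint W) ^ n) h) atTop (nhds 0) :=
  unitary_quasi_affine_transform_implies_C1_general W U' Λ hΛdense hint
end

section
/- Let W be a contraction on a Hilbert space H with Ker W = {0}. If W is of class C_{·1}, then the operator Λ₀ := P_H|_R : R → H (the orthogonal projection of K₊ onto H restricted to the residual subspace R) is a quasi-affinity satisfying WΛ₀ = Λ₀R, where R = U₊|_R is the residual unitary operator of the minimal isometric dilation U₊ of W. In particular, W has a unitary quasi-affine transform. -/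
open scoped InnerProductSpace
open Filter

/-!
Testing `W ^ n = J† V ^ n J` against the dense span of the vectors `V ^ n J h` gives
`J† V = W J†`, and by adjoints `V† ^ n J = J W† ^ n`.

Injectivity: if `y = V ^ n c` lies in the residual subspace `R` and `J† y = 0`, then
`W ^ n (J† c) = J† y = 0`, so `J† c = 0` and `⟪V ^ n J h, y⟫ = ⟪h, J† c⟫ = 0`; thus `y = 0`.

Density: the projections `V ^ n V† ^ n` onto `range (V ^ n)` decrease, so `V ^ n V† ^ n k`
converges to some `z ∈ R`, and `⟪k, z⟫ = lim ‖V† ^ n k‖²`. If `h ⊥ J† R`, then `J h ⊥ R`, hence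
`W† ^ n h = J† V† ^ n J h → 0`, and the class `C_{·1}` assumption forces `h = 0`.
-/

open scoped InnerProduct Topology

namespace ContinuousLinearMap

variable {𝕜 E : Type*} [RCLike 𝕜] [NormedAddCommGroup E] [InnerProductSpace 𝕜 E]

def residualSubspace (V : E →L[𝕜] E) : Submodule 𝕜 E :=
  ⨅ n : ℕ, (V ^ n).range

theorem mem_residualSubspace {V : E →L[𝕜] E} {y : E} :
    y ∈ V.residualSubspace ↔ ∀ n : ℕ, y ∈ Set.range (V ^ n) := by
  simp only [residualSubspace, Submodule.mem_iInf, LinearMap.mem_range, coe_coe, Set.mem_range]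

theorem coe_residualSubspace (V : E →L[𝕜] E) :
    (V.residualSubspace : Set E) = {y | ∀ n : ℕ, y ∈ Set.range (V ^ n)} :=
  Set.ext fun _ => mem_residualSubspace

theorem norm_pow_apply_of_norm_map_s9 {V : E →L[𝕜] E} (hV : ∀ x, ‖V x‖ = ‖x‖) (n : ℕ) (x : E) :
    ‖(V ^ n) x‖ = ‖x‖ := by
  induction n with
  | zero => simp
  | succ n ih => rw [pow_succ', mul_apply_eq_comp, hV, ih]

variable [CompleteSpace E]

theorem adjoint_pow_s9 (A : E →L[𝕜] E) (n : ℕ) : (A ^ n)† = A† ^ n := by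
  simp only [← star_eq_adjoint, star_pow]

theorem isSelfAdjoint_pow_mul_adjoint_pow (V : E →L[𝕜] E) (n : ℕ) :
    IsSelfAdjoint (V ^ n * V† ^ n) := by
  simpa only [star_eq_adjoint, adjoint_pow_s9] using IsSelfAdjoint.mul_star_self (V ^ n)

theorem inner_self_pow_mul_adjoint_pow_apply (V : E →L[𝕜] E) (n : ℕ) (k : E) :
    ⟪k, (V ^ n * V† ^ n) k⟫_𝕜 = (‖(V† ^ n) k‖ : 𝕜) ^ 2 := by
  rw [mul_apply_eq_comp, ← adjoint_inner_left, adjoint_pow_s9, inner_self_eq_norm_sq_to_K]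

section Isometry

variable {V : E →L[𝕜] E} (hV : ∀ x, ‖V x‖ = ‖x‖)
include hV

theorem pow_mul_adjoint_pow_mul_of_le {n m : ℕ} (hnm : n ≤ m) :
    (V ^ n * V† ^ n) * (V ^ m * V† ^ m) = V ^ m * V† ^ m := by
  obtain ⟨d, rfl⟩ := Nat.exists_eq_add_of_le hnm
  have hVn : V† ^ n * V ^ n = 1 :=
    pow_mul_pow_eq_one n ((norm_map_iff_adjoint_comp_self V).mp hV)
  calc (V ^ n * V† ^ n) * (V ^ (n + d) * V† ^ (n + d))
      = V ^ n * (V† ^ n * V ^ n) * V ^ d * V† ^ (n + d) := by simp only [pow_add, mul_assoc]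
    _ = V ^ (n + d) * V† ^ (n + d) := by rw [hVn, mul_one, ← pow_add]

theorem antitone_norm_adjoint_pow_apply (k : E) : Antitone fun n => ‖(V† ^ n) k‖ := by
  have hV1 : ‖V†‖ ≤ 1 := by
    rw [adjoint.norm_map]
    exact V.opNorm_le_bound zero_le_one fun x => (hV x).trans_le (one_mul _).ge
  refine antitone_nat_of_succ_le fun n => ?_
  rw [pow_succ', mul_apply_eq_comp]
  exact (V†.le_opNorm _).trans (mul_le_of_le_one_left (norm_nonneg _) hV1)

theorem norm_pow_mul_adjoint_pow_apply_sub_sq {n m : ℕ} (hnm : n ≤ m) (k : E) :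
    ‖(V ^ n * V† ^ n) k - (V ^ m * V† ^ m) k‖ ^ 2 = ‖(V† ^ n) k‖ ^ 2 - ‖(V† ^ m) k‖ ^ 2 := by
  have hinner : ⟪(V ^ n * V† ^ n) k, (V ^ m * V† ^ m) k⟫_𝕜 = (‖(V† ^ m) k‖ : 𝕜) ^ 2 := by
    rw [← adjoint_inner_right, (isSelfAdjoint_pow_mul_adjoint_pow V n).adjoint_eq,
      ← mul_apply_eq_comp, pow_mul_adjoint_pow_mul_of_le hV hnm,
      inner_self_pow_mul_adjoint_pow_apply]
  rw [norm_sub_sq (𝕜 := 𝕜), hinner, mul_apply_eq_comp, mul_apply_eq_comp,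
    norm_pow_apply_of_norm_map_s9 hV, norm_pow_apply_of_norm_map_s9 hV, ← RCLike.ofReal_pow,
    RCLike.ofReal_re]
  ring

theorem cauchySeq_pow_mul_adjoint_pow_apply (k : E) :
    CauchySeq fun n => (V ^ n * V† ^ n) k := by
  set b : ℕ → ℝ := fun n => ‖(V† ^ n) k‖ ^ 2
  have hb : Antitone b := fun n m h =>
    pow_le_pow_left₀ (norm_nonneg _) (antitone_norm_adjoint_pow_apply hV k h) 2
  obtain ⟨L, hL⟩ : ∃ L, Tendsto b atTop (𝓝 L) :=
    ⟨_, tendsto_atTop_ciInf hb ⟨0, by rintro _ ⟨n, rfl⟩; positivity⟩⟩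
  refine Metric.cauchySeq_iff'.mpr fun ε hε => ?_
  obtain ⟨N, hN⟩ := eventually_atTop.mp
    (hL.eventually (gt_mem_nhds (lt_add_of_pos_right L (pow_pos hε 2))))
  refine ⟨N, fun n hn => lt_of_pow_lt_pow_left₀ 2 hε.le ?_⟩
  rw [dist_comm, dist_eq_norm, norm_pow_mul_adjoint_pow_apply_sub_sq hV hn]
  linarith [hb.le_of_tendsto hL n, hN N le_rfl]

theorem exists_mem_residualSubspace_tendsto_pow_mul_adjoint_pow_apply (k : E) :
    ∃ z ∈ V.residualSubspace, Tendsto (fun n => (V ^ n * V† ^ n) k) atTop (𝓝 z) := by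
  obtain ⟨z, hz⟩ := cauchySeq_tendsto_of_complete (cauchySeq_pow_mul_adjoint_pow_apply hV k)
  refine ⟨z, mem_residualSubspace.mpr fun n => ?_, hz⟩
  have hclosed : IsClosed (Set.range (V ^ n)) :=
    (AddMonoidHomClass.isometry_of_norm _ (norm_pow_apply_of_norm_map_s9 hV n)).isClosedEmbedding
      |>.isClosed_range
  refine hclosed.mem_of_tendsto hz (eventually_atTop.mpr ⟨n, fun m hm => ?_⟩)
  rw [← pow_mul_adjoint_pow_mul_of_le hV hm, mul_assoc, mul_apply_eq_comp]
  exact Set.mem_range_self _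

theorem tendsto_adjoint_pow_apply_of_mem_orthogonal {k : E} (hk : k ∈ V.residualSubspaceᗮ) :
    Tendsto (fun n => (V† ^ n) k) atTop (𝓝 0) := by
  obtain ⟨z, hzR, hz⟩ := exists_mem_residualSubspace_tendsto_pow_mul_adjoint_pow_apply hV k
  have hinner := (tendsto_const_nhds (x := k)).inner (𝕜 := 𝕜) hz
  simp only [inner_self_pow_mul_adjoint_pow_apply, Submodule.inner_left_of_mem_orthogonal hzR hk]
    at hinner
  have hsq : Tendsto (fun n => ‖(V† ^ n) k‖ ^ 2) atTop (𝓝 0) := by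
    simpa using hinner.norm
  refine tendsto_zero_iff_norm_tendsto_zero.mpr ?_
  simpa [Real.sqrt_sq (norm_nonneg _)] using hsq.sqrt

end Isometry

section MinimalDilation

variable {H K : Type*}
  [NormedAddCommGroup H] [InnerProductSpace 𝕜 H] [CompleteSpace H]
  [NormedAddCommGroup K] [InnerProductSpace 𝕜 K] [CompleteSpace K]

structure IsMinimalDilation (J : H →L[𝕜] K) (W : H →L[𝕜] H) (V : K →L[𝕜] K) : Prop where
  pow_apply : ∀ (n : ℕ) (h : H), (W ^ n) h = (J†) ((V ^ n) (J h))
  dense_span : Dense (Submodule.span 𝕜 {x : K | ∃ (n : ℕ) (h : H), x = (V ^ n) (J h)} : Set K)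

namespace IsMinimalDilation

variable {J : H →L[𝕜] K} {W : H →L[𝕜] H} {V : K →L[𝕜] K} (hD : IsMinimalDilation J W V)
include hD

theorem adjoint_apply_self (h : H) : (J†) (J h) = h := by
  simpa using (hD.pow_apply 0 h).symm

theorem adjoint_comp_eq_comp_adjoint : J† ∘L V = W ∘L J† := by
  refine ext_on hD.dense_span ?_
  rintro _ ⟨n, h, rfl⟩
  rw [comp_apply, comp_apply, ← hD.pow_apply, ← mul_apply_eq_comp V, ← pow_succ', ← hD.pow_apply,
    ← mul_apply_eq_comp W, ← pow_succ']

theorem adjoint_pow_apply (n : ℕ) (y : K) : (J†) ((V ^ n) y) = (W ^ n) ((J†) y) := by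
  have hsemiconj : Function.Semiconj (J†) V W := fun y =>
    congr($hD.adjoint_comp_eq_comp_adjoint y)
  simpa only [FunLike.coe_pow_eq_iterate] using hsemiconj.iterate_right n y

theorem adjoint_pow_apply_apply (n : ℕ) (h : H) : (V† ^ n) (J h) = J ((W† ^ n) h) := by
  have hadj := congr_arg adjoint hD.adjoint_comp_eq_comp_adjoint
  rw [adjoint_comp, adjoint_comp, adjoint_adjoint] at hadj
  have hsemiconj : Function.Semiconj J (W†) (V†) := fun h => congr($hadj h).symm
  simpa only [FunLike.coe_pow_eq_iterate] using (hsemiconj.iterate_right n h).symm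

theorem injOn_adjoint_residualSubspace (hV : ∀ x, ‖V x‖ = ‖x‖) (hW : Function.Injective W) :
    Set.InjOn (J†) V.residualSubspace := by
  suffices h0 : ∀ y ∈ V.residualSubspace, (J†) y = 0 → y = 0 from fun y₁ hy₁ y₂ hy₂ heq =>
    sub_eq_zero.mp (h0 _ (sub_mem hy₁ hy₂) (by rw [map_sub, heq, sub_self]))
  intro y hy hJy
  have hperp : innerSL 𝕜 y = 0 := by
    refine ext_on hD.dense_span ?_
    rintro _ ⟨n, h, rfl⟩
    obtain ⟨c, rfl⟩ := mem_residualSubspace.mp hy n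
    have hJc : (J†) c = 0 := by
      refine (FunLike.coe_pow_eq_iterate W n ▸ hW.iterate n) ?_
      rw [← hD.adjoint_pow_apply, hJy, map_zero]
    rw [innerSL_apply_apply, zero_apply,
      (LinearMap.norm_map_iff_inner_map_map (V ^ n)).mp (norm_pow_apply_of_norm_map_s9 hV n),
      ← adjoint_inner_left, hJc, inner_zero_left]
  simpa using congr($hperp y)

theorem dense_adjoint_image_residualSubspace (hV : ∀ x, ‖V x‖ = ‖x‖)
    (hW : ∀ h : H, h ≠ 0 → ¬Tendsto (fun n => (W† ^ n) h) atTop (𝓝 0)) :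
    Dense ((J†) '' V.residualSubspace) := by
  change Dense (V.residualSubspace.map ((J†) : K →ₗ[𝕜] H) : Set H)
  rw [Submodule.dense_iff_topologicalClosure_eq_top,
    Submodule.topologicalClosure_eq_top_iff, Submodule.eq_bot_iff]
  intro h hh
  by_contra hne
  refine hW h hne ?_
  have hJh : J h ∈ V.residualSubspaceᗮ := fun y hy => by
    rw [← adjoint_inner_left]
    exact (Submodule.mem_orthogonal _ _).mp hh _ (Submodule.mem_map_of_mem hy)
  simpa only [Function.comp_def, hD.adjoint_pow_apply_apply, hD.adjoint_apply_self, map_zero] using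
    ((J†).continuous.tendsto 0).comp (tendsto_adjoint_pow_apply_of_mem_orthogonal hV hJh)

end IsMinimalDilation

end MinimalDilation

end ContinuousLinearMap

theorem projection_residual_quasi_affinity_general
    {H K : Type*}
    [NormedAddCommGroup H] [InnerProductSpace ℂ H] [CompleteSpace H]
    [NormedAddCommGroup K] [InnerProductSpace ℂ K] [CompleteSpace K]
    (J : H →ₗᵢ[ℂ] K)
    (W : H →L[ℂ] H) (hker : LinearMap.ker (W : H →ₗ[ℂ] H) = ⊥)
    (hC1 : ∀ h : H, h ≠ 0 →
      ¬ Tendsto (fun n : ℕ => ((ContinuousLinearMap.adjoint W) ^ n) h) atTop (nhds 0))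
    (Up : K →L[ℂ] K) (hUp : ∀ x, ‖Up x‖ = ‖x‖)
    (hdil : ∀ (n : ℕ) (h : H),
      (W ^ n) h = (ContinuousLinearMap.adjoint J.toContinuousLinearMap) ((Up ^ n) (J h)))
    (hmin : Dense (↑(Submodule.span ℂ {x : K | ∃ (n : ℕ) (h : H), x = (Up ^ n) (J h)}) : Set K))
    (Rset : Set K) (hRset : Rset = {y : K | ∀ n : ℕ, y ∈ Set.range (Up ^ n)}) :
    (∀ y₁ ∈ Rset, ∀ y₂ ∈ Rset,
        (ContinuousLinearMap.adjoint J.toContinuousLinearMap) y₁ =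
          (ContinuousLinearMap.adjoint J.toContinuousLinearMap) y₂ → y₁ = y₂) ∧
    Dense ((ContinuousLinearMap.adjoint J.toContinuousLinearMap) '' Rset) ∧
    (∀ y ∈ Rset,
      W ((ContinuousLinearMap.adjoint J.toContinuousLinearMap) y) =
        (ContinuousLinearMap.adjoint J.toContinuousLinearMap) (Up y)) := by
  have hD : J.toContinuousLinearMap.IsMinimalDilation W Up := ⟨hdil, hmin⟩
  rw [hRset, ← Up.coe_residualSubspace]
  exact ⟨hD.injOn_adjoint_residualSubspace hUp (LinearMap.ker_eq_bot.mp hker),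
    hD.dense_adjoint_image_residualSubspace hUp hC1,
    fun y _ => congr($hD.adjoint_comp_eq_comp_adjoint y).symm⟩

/-- If `W` is a contraction of class `C_{·1}` with `Ker W = {0}`, then
`Λ₀ := P_H|_R` is a quasi-affinity from the residual subspace `R` to `H` satisfying
`W Λ₀ = Λ₀ R` (where `R = Up|_R` is the residual unitary). -/
theorem projection_residual_quasi_affinity
    {H K : Type*}
    [NormedAddCommGroup H] [InnerProductSpace ℂ H] [CompleteSpace H]
    [NormedAddCommGroup K] [InnerProductSpace ℂ K] [CompleteSpace K]
    (J : H →ₗᵢ[ℂ] K)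
    (W : H →L[ℂ] H) (hW : ‖W‖ ≤ 1) (hker : LinearMap.ker (W : H →ₗ[ℂ] H) = ⊥)
    (hC1 : ∀ h : H, h ≠ 0 →
      ¬ Tendsto (fun n : ℕ => ((ContinuousLinearMap.adjoint W) ^ n) h) atTop (nhds 0))
    (Up : K →L[ℂ] K) (hUp : ∀ x, ‖Up x‖ = ‖x‖)
    (hdil : ∀ (n : ℕ) (h : H),
      (W ^ n) h = (ContinuousLinearMap.adjoint J.toContinuousLinearMap) ((Up ^ n) (J h)))
    (hmin : Dense (↑(Submodule.span ℂ {x : K | ∃ (n : ℕ) (h : H), x = (Up ^ n) (J h)}) : Set K))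
    (Rset : Set K) (hRset : Rset = {y : K | ∀ n : ℕ, y ∈ Set.range (Up ^ n)}) :
    (∀ y₁ ∈ Rset, ∀ y₂ ∈ Rset,
        (ContinuousLinearMap.adjoint J.toContinuousLinearMap) y₁ =
          (ContinuousLinearMap.adjoint J.toContinuousLinearMap) y₂ → y₁ = y₂) ∧
    Dense ((ContinuousLinearMap.adjoint J.toContinuousLinearMap) '' Rset) ∧
    (∀ y ∈ Rset,
      W ((ContinuousLinearMap.adjoint J.toContinuousLinearMap) y) =
        (ContinuousLinearMap.adjoint J.toContinuousLinearMap) (Up y)) :=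
  projection_residual_quasi_affinity_general J W hker hC1 Up hUp hdil hmin Rset hRset
end

section
/- If U₁ and U₂ are unitary operators on Hilbert spaces H₁ and H₂ respectively, and U₁ is a quasi-affine transform of U₂ (there exists a quasi-affinity Λ : H₁ → H₂ with U₂Λ = ΛU₁), then U₁ and U₂ are unitarily equivalent. -/
/-!
Polar decomposition: with `|Λ| = √(Λ† Λ)` one has `‖|Λ| x‖ = ‖Λ x‖`, so `|Λ| x ↦ Λ x` extends
to a unitary `V` with `V |Λ| = Λ`; injectivity of `Λ` makes the range of `|Λ|` dense and the
density of the range of `Λ` makes `V` onto. The intertwining relation forces `U₁` to commute with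
`Λ† Λ`, hence with `|Λ|`, and then `U₂ V |Λ| = U₂ Λ = Λ U₁ = V |Λ| U₁ = V U₁ |Λ|` on the dense
range of `|Λ|`.
-/

open scoped InnerProduct InnerProductSpace

namespace ContinuousLinearMap

variable {𝕜 E F G : Type*} [RCLike 𝕜]
  [NormedAddCommGroup E] [InnerProductSpace 𝕜 E] [CompleteSpace E]
  [NormedAddCommGroup F] [InnerProductSpace 𝕜 F] [CompleteSpace F]
  [NormedAddCommGroup G] [InnerProductSpace 𝕜 G] [CompleteSpace G]

theorem norm_apply_eq_of_adjoint_comp_self_eq {A : E →L[𝕜] F} {B : E →L[𝕜] G}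
    (h : A† ∘L A = B† ∘L B) (x : E) : ‖A x‖ = ‖B x‖ := by
  have := apply_norm_sq_eq_inner_adjoint_left A x
  rw [h, ← apply_norm_sq_eq_inner_adjoint_left] at this
  exact (pow_left_inj₀ (norm_nonneg _) (norm_nonneg _) two_ne_zero).mp this

theorem _root_.IsSelfAdjoint.denseRange_of_injective {S : E →L[𝕜] E} (hS : IsSelfAdjoint S)
    (hinj : Function.Injective S) : DenseRange S := by
  have : S.rangeᗮ = ⊥ := by
    rw [orthogonal_range, ← star_eq_adjoint, hS.star_eq, LinearMap.ker_eq_bot]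
    exact hinj
  rw [← Submodule.topologicalClosure_eq_top_iff,
    ← Submodule.dense_iff_topologicalClosure_eq_top] at this
  rwa [DenseRange, ← coe_coe, ← LinearMap.coe_range]

theorem commute_adjoint_comp_self_of_intertwines (U₁ : E ≃ₗᵢ[𝕜] E) (U₂ : F →ₗᵢ[𝕜] F)
    {A : E →L[𝕜] F} (h : ∀ x, U₂ (A x) = A (U₁ x)) :
    Commute (U₁ : E →L[𝕜] E) (A† ∘L A) := by
  ext x
  refine ext_inner_right 𝕜 fun y => ?_
  obtain ⟨y, rfl⟩ := U₁.surjective y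
  calc ⟪U₁ ((A† ∘L A) x), U₁ y⟫_𝕜 = ⟪A x, A y⟫_𝕜 := by
        rw [LinearIsometryEquiv.inner_map_map, comp_apply, adjoint_inner_left]
    _ = ⟪A (U₁ x), A (U₁ y)⟫_𝕜 := by rw [← h, ← h, LinearIsometry.inner_map_map]
    _ = ⟪(A† ∘L A) (U₁ x), U₁ y⟫_𝕜 := by rw [comp_apply, adjoint_inner_left]

variable {H K : Type*}
  [NormedAddCommGroup H] [InnerProductSpace ℂ H] [CompleteSpace H]
  [NormedAddCommGroup K] [InnerProductSpace ℂ K] [CompleteSpace K]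

theorem adjoint_sqrt_comp_sqrt_adjoint_comp_self (A : H →L[ℂ] K) :
    (CFC.sqrt (A† ∘L A))† ∘L CFC.sqrt (A† ∘L A) = A† ∘L A := by
  rw [← star_eq_adjoint, (CFC.sqrt_nonneg _).isSelfAdjoint.star_eq, ← mul_def,
    CFC.sqrt_mul_sqrt_self _ ((nonneg_iff_isPositive _).mpr (isPositive_adjoint_comp_self A))]

theorem norm_sqrt_adjoint_comp_self_apply (A : H →L[ℂ] K) (x : H) :
    ‖CFC.sqrt (A† ∘L A) x‖ = ‖A x‖ :=
  norm_apply_eq_of_adjoint_comp_self_eq (adjoint_sqrt_comp_sqrt_adjoint_comp_self A) x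

theorem denseRange_sqrt_adjoint_comp_self {A : H →L[ℂ] K} (hA : Function.Injective A) :
    DenseRange ⇑(CFC.sqrt (A† ∘L A)) := by
  refine (CFC.sqrt_nonneg (A† ∘L A)).isSelfAdjoint.denseRange_of_injective ?_
  refine (injective_iff_map_eq_zero _).mpr fun x hx => (injective_iff_map_eq_zero A).mp hA x ?_
  rw [← norm_eq_zero, ← norm_sqrt_adjoint_comp_self_apply, hx, norm_zero]

theorem exists_linearIsometryEquiv_apply_sqrt_adjoint_comp_self {A : H →L[ℂ] K}
    (hinj : Function.Injective A) (hdense : DenseRange A) :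
    ∃ V : H ≃ₗᵢ[ℂ] K, ∀ x, V (CFC.sqrt (A† ∘L A) x) = A x :=
  ⟨(LinearEquiv.refl ℂ H).extendOfIsometry (CFC.sqrt (A† ∘L A)).toLinearMap A.toLinearMap
      (denseRange_sqrt_adjoint_comp_self hinj) hdense
      fun x => (norm_sqrt_adjoint_comp_self_apply A x).symm,
    LinearEquiv.extendOfIsometry_eq _ _ _ _ _ _⟩

end ContinuousLinearMap

open ContinuousLinearMap

/-- If a unitary `U₁` is a quasi-affine transform of a unitary `U₂`
(i.e. there is a quasi-affinity `Λ : H₁ → H₂` with `U₂ Λ = Λ U₁`), then `U₁` and `U₂`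
are unitarily equivalent. -/
theorem quasi_similar_unitaries_unitarily_equivalent
    {H₁ H₂ : Type*}
    [NormedAddCommGroup H₁] [InnerProductSpace ℂ H₁] [CompleteSpace H₁]
    [NormedAddCommGroup H₂] [InnerProductSpace ℂ H₂] [CompleteSpace H₂]
    (U₁ : H₁ ≃ₗᵢ[ℂ] H₁) (U₂ : H₂ ≃ₗᵢ[ℂ] H₂)
    (Λ : H₁ →L[ℂ] H₂)
    (hΛinj : Function.Injective Λ) (hΛdense : Dense (Set.range Λ))
    (hint : ∀ x, U₂ (Λ x) = Λ (U₁ x)) :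
    ∃ V : H₁ ≃ₗᵢ[ℂ] H₂, ∀ x, U₂ (V x) = V (U₁ x) := by
  obtain ⟨V, hV⟩ := exists_linearIsometryEquiv_apply_sqrt_adjoint_comp_self hΛinj hΛdense
  have hU₁ : Commute (CFC.sqrt (Λ† ∘L Λ)) U₁ :=
    (commute_adjoint_comp_self_of_intertwines U₁ U₂.toLinearIsometry hint).symm.cfcₙ_nnreal _
  refine ⟨V, congrFun <| (denseRange_sqrt_adjoint_comp_self hΛinj).equalizer
    (g := fun x => U₂ (V x)) (h := fun x => V (U₁ x)) (by fun_prop) (by fun_prop) ?_⟩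
  funext x
  calc U₂ (V (CFC.sqrt (Λ† ∘L Λ) x)) = Λ (U₁ x) := by rw [hV, hint]
    _ = V (U₁ (CFC.sqrt (Λ† ∘L Λ) x)) := by
      rw [← hV]; exact congrArg V (DFunLike.congr_fun hU₁.eq x)
end

section
/- Let W be a contraction on a complex Hilbert space H with Ker W = {0} and of class C_{·1}, and let U' be a unitary quasi-affine transform of W. Then the point spectra satisfy σ_p(U') = σ_p(W) ∩ C, where C is the unit circle. -/
/-!
An eigenvector `Λ u` of `W` comes from any eigenvector `u` of `U'`, whose eigenvalue is unimodular
because `U'` is isometric. Conversely, if `W h = z • h` with `|z| = 1`, then `h` is also an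
eigenvector of the contraction's adjoint, `W† h = conj z • h`, since
`‖W† h - conj z • h‖² = ‖W† h‖² - ‖h‖² ≤ 0`. Taking adjoints in `W Λ = Λ U'` gives
`Λ† W† = U'⁻¹ Λ†`, so `Λ† h` is an eigenvector of `U'⁻¹` for `conj z = z⁻¹`, and it is nonzero
because `ker Λ† = (range Λ)ᗮ = 0`.
-/

open Filter ContinuousLinearMap
open scoped InnerProductSpace

namespace ContinuousLinearMap

variable {𝕜 E F : Type*} [RCLike 𝕜]
  [NormedAddCommGroup E] [InnerProductSpace 𝕜 E] [CompleteSpace E]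
  [NormedAddCommGroup F] [InnerProductSpace 𝕜 F] [CompleteSpace F]

theorem adjoint_injective_of_denseRange {T : E →L[𝕜] F} (hT : Dense (Set.range T)) :
    Function.Injective (adjoint T) := by
  have hclosure : (LinearMap.range (T : E →ₗ[𝕜] F)).topologicalClosure = ⊤ :=
    Submodule.dense_iff_topologicalClosure_eq_top.mp hT
  rw [Submodule.topologicalClosure_eq_top_iff, orthogonal_range] at hclosure
  exact LinearMap.ker_eq_bot.mp hclosure

theorem adjoint_apply_eq_conj_smul_of_apply_eq_smul {T : E →L[𝕜] E} (hT : ‖T‖ ≤ 1)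
    {z : 𝕜} (hz : ‖z‖ = 1) {h : E} (hTh : T h = z • h) :
    adjoint T h = (starRingEnd 𝕜) z • h := by
  have hadj : ‖adjoint T h‖ ≤ ‖h‖ := by
    have hadj_norm : ‖adjoint T‖ ≤ 1 := by rwa [LinearIsometryEquiv.norm_map]
    simpa only [one_mul] using (adjoint T).le_of_opNorm_le hadj_norm h
  have hinner : RCLike.re ⟪adjoint T h, (starRingEnd 𝕜) z • h⟫_𝕜 = ‖h‖ ^ 2 := by
    rw [inner_smul_right, adjoint_inner_left, hTh, inner_smul_right, ← mul_assoc,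
      RCLike.conj_mul, hz, inner_self_eq_norm_sq_to_K]
    simp
  have hdefect : ‖adjoint T h - (starRingEnd 𝕜) z • h‖ ^ 2 = ‖adjoint T h‖ ^ 2 - ‖h‖ ^ 2 := by
    rw [@norm_sub_sq 𝕜, hinner, norm_smul, RCLike.norm_conj, hz, one_mul]
    ring
  have hsq : ‖adjoint T h - (starRingEnd 𝕜) z • h‖ ^ 2 ≤ 0 := by
    rw [hdefect]
    nlinarith [norm_nonneg (adjoint T h)]
  exact sub_eq_zero.mp (norm_eq_zero.mp (pow_eq_zero_iff two_ne_zero |>.mp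
    (le_antisymm hsq (sq_nonneg _))))

theorem adjoint_apply_adjoint_apply_of_intertwine
    {W : E →L[𝕜] E} {U : F ≃ₗᵢ[𝕜] F} {Λ : F →L[𝕜] E} (hint : ∀ x, W (Λ x) = Λ (U x))
    (h : E) : adjoint Λ (adjoint W h) = U.symm (adjoint Λ h) := by
  have hcomp : W ∘L Λ = Λ ∘L (U : F →L[𝕜] F) := ext hint
  have hadj := congrArg (fun T => adjoint T h) hcomp
  simpa only [adjoint_comp, comp_apply, LinearIsometryEquiv.adjoint_eq_symm,
    LinearIsometryEquiv.toContinuousLinearEquiv_symm, ContinuousLinearEquiv.coe_coe,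
    LinearIsometryEquiv.coe_symm_toContinuousLinearEquiv] using hadj

end ContinuousLinearMap

theorem LinearIsometry.norm_eq_one_of_apply_eq_smul {𝕜 E : Type*} [NormedField 𝕜]
    [SeminormedAddCommGroup E] [NormedSpace 𝕜 E] (f : E →ₗᵢ[𝕜] E) {z : 𝕜} {u : E}
    (hu : ‖u‖ ≠ 0) (hfu : f u = z • u) : ‖z‖ = 1 := by
  have hnorm := f.norm_map u
  rw [hfu, norm_smul] at hnorm
  exact mul_eq_right₀ hu |>.mp hnorm

theorem point_spectrum_of_unitary_quasi_affine_transform_general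
    {H H' : Type*}
    [NormedAddCommGroup H] [InnerProductSpace ℂ H] [CompleteSpace H]
    [NormedAddCommGroup H'] [InnerProductSpace ℂ H'] [CompleteSpace H']
    (W : H →L[ℂ] H) (hW : ‖W‖ ≤ 1)
    (U' : H' ≃ₗᵢ[ℂ] H')
    (Λ : H' →L[ℂ] H)
    (hΛinj : Function.Injective Λ) (hΛdense : Dense (Set.range Λ))
    (hint : ∀ x, W (Λ x) = Λ (U' x)) :
    {z : ℂ | ∃ u : H', u ≠ 0 ∧ U' u = z • u} =
      {z : ℂ | ∃ h : H, h ≠ 0 ∧ W h = z • h} ∩ {z : ℂ | ‖z‖ = 1} := by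
  ext z
  constructor
  · rintro ⟨u, hu, hU'u⟩
    refine ⟨⟨Λ u, (map_ne_zero_iff Λ hΛinj).mpr hu, by rw [hint, hU'u, map_smul]⟩, ?_⟩
    exact U'.toLinearIsometry.norm_eq_one_of_apply_eq_smul (norm_ne_zero_iff.mpr hu) hU'u
  · rintro ⟨⟨h, hh, hWh⟩, hz⟩
    set v := adjoint Λ h
    have hv : v ≠ 0 := (map_ne_zero_iff _ (adjoint_injective_of_denseRange hΛdense)).mpr hh
    have hU'symm : U'.symm v = (starRingEnd ℂ) z • v := by
      rw [← adjoint_apply_adjoint_apply_of_intertwine hint,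
        adjoint_apply_eq_conj_smul_of_apply_eq_smul hW hz hWh, map_smul]
    refine ⟨v, hv, ?_⟩
    calc U' v = (z * (starRingEnd ℂ) z) • U' v := by rw [RCLike.mul_conj, hz]; simp
      _ = z • U' (U'.symm v) := by rw [hU'symm, map_smul, mul_smul]
      _ = z • v := by rw [U'.apply_symm_apply]

/-- If `W` is a contraction of class `C_{·1}` with trivial kernel and `U'`
is a unitary quasi-affine transform of `W`, then `σ_p(U') = σ_p(W) ∩ C`, where `C` is
the unit circle. -/
theorem point_spectrum_of_unitary_quasi_affine_transform
    {H H' : Type*}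
    [NormedAddCommGroup H] [InnerProductSpace ℂ H] [CompleteSpace H]
    [NormedAddCommGroup H'] [InnerProductSpace ℂ H'] [CompleteSpace H']
    (W : H →L[ℂ] H) (hW : ‖W‖ ≤ 1) (hker : LinearMap.ker (W : H →ₗ[ℂ] H) = ⊥)
    (hC1 : ∀ h : H, h ≠ 0 →
      ¬ Tendsto (fun n : ℕ => ((ContinuousLinearMap.adjoint W) ^ n) h) atTop (nhds 0))
    (U' : H' ≃ₗᵢ[ℂ] H')
    (Λ : H' →L[ℂ] H)
    (hΛinj : Function.Injective Λ) (hΛdense : Dense (Set.range Λ))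
    (hint : ∀ x, W (Λ x) = Λ (U' x)) :
    {z : ℂ | ∃ u : H', u ≠ 0 ∧ U' u = z • u} =
      {z : ℂ | ∃ h : H, h ≠ 0 ∧ W h = z • h} ∩ {z : ℂ | ‖z‖ = 1} :=
  point_spectrum_of_unitary_quasi_affine_transform_general W hW U' Λ hΛinj hΛdense hint
end

section
/- Let W be a power bounded operator on a Hilbert space H and let L be a Banach limit on ℓ^∞(ℕ). Then the sesquilinear form [h,g] := L({⟨Wⁿh, Wⁿg⟩}_n) is a bounded positive semidefinite Hermitian form on H satisfying [Wh, Wg] = [h, g] for all h, g ∈ H; consequently W induces a well-defined isometry W₀ on the completion of H/H₀, where H₀ = {h : [h,h] = 0}. -/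
/-!
Splitting into real and imaginary parts, `L` extends to a complex-linear functional `Λ` on bounded
complex sequences which commutes with conjugation, is nonnegative on nonnegative sequences,
satisfies `‖Λ F‖ ≤ 2 ‖F‖` and is shift invariant. The form is `Λ` applied to the sequence
`n ↦ ⟪Wⁿ h, Wⁿ g⟫`, which is sesquilinear in `(h, g)`, Hermitian, nonnegative on the diagonal and
bounded by `C² ‖h‖ ‖g‖`; each property passes through `Λ`. Replacing `h, g` by `W h, W g` shifts
the sequence by one, so shift invariance of `L` gives `[W h, W g] = [h, g]`.
-/

open scoped InnerProductSpace ComplexOrder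
open BoundedContinuousFunction

namespace BoundedContinuousFunction

variable {α : Type*} [TopologicalSpace α]

theorem map_const_of_map_one {L : (α →ᵇ ℝ) →ₗ[ℝ] ℝ} (hL1 : L (const α 1) = 1) (c : ℝ) :
    L (const α c) = c := by
  have : const α c = c • const α 1 := by ext; simp
  rw [this, map_smul, hL1, smul_eq_mul, mul_one]

theorem abs_map_le_norm_of_nonneg {L : (α →ᵇ ℝ) →ₗ[ℝ] ℝ} (hL1 : L (const α 1) = 1)
    (hLpos : ∀ f : α →ᵇ ℝ, (∀ x, 0 ≤ f x) → 0 ≤ L f) (f : α →ᵇ ℝ) : |L f| ≤ ‖f‖ := by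
  have hupper : 0 ≤ L (const α ‖f‖ - f) :=
    hLpos _ fun x => sub_nonneg.2 ((le_abs_self _).trans (f.norm_coe_le_norm x))
  have hlower : 0 ≤ L (f + const α ‖f‖) :=
    hLpos _ fun x => neg_le_iff_add_nonneg.1 (neg_le_of_abs_le (f.norm_coe_le_norm x))
  rw [map_sub, map_const_of_map_one hL1] at hupper
  rw [map_add, map_const_of_map_one hL1] at hlower
  exact abs_le.2 ⟨by linarith, by linarith⟩

noncomputable def complexExtension (L : (α →ᵇ ℝ) →ₗ[ℝ] ℝ) : (α →ᵇ ℂ) →ₗ[ℂ] ℂ where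
  toFun F := L (Complex.reCLM.compLeftContinuousBounded α F) +
    L (Complex.imCLM.compLeftContinuousBounded α F) * Complex.I
  map_add' F G := by simp only [map_add, Complex.ofReal_add]; ring
  map_smul' a F := by
    have hre : Complex.reCLM.compLeftContinuousBounded α (a • F) =
        a.re • Complex.reCLM.compLeftContinuousBounded α F -
          a.im • Complex.imCLM.compLeftContinuousBounded α F := by
      ext x; simp [ContinuousLinearMap.compLeftContinuousBounded_apply]
    have him : Complex.imCLM.compLeftContinuousBounded α (a • F) =
        a.re • Complex.imCLM.compLeftContinuousBounded α F +
          a.im • Complex.reCLM.compLeftContinuousBounded α F := by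
      ext x; simp [ContinuousLinearMap.compLeftContinuousBounded_apply]
    simp only [hre, him, map_add, map_sub, map_smul, smul_eq_mul, RingHom.id_apply]
    apply Complex.ext <;> simp

variable {L : (α →ᵇ ℝ) →ₗ[ℝ] ℝ}

theorem complexExtension_apply (F : α →ᵇ ℂ) :
    complexExtension L F = L (Complex.reCLM.compLeftContinuousBounded α F) +
      L (Complex.imCLM.compLeftContinuousBounded α F) * Complex.I :=
  rfl

theorem complexExtension_star (F : α →ᵇ ℂ) :
    complexExtension L (star F) = starRingEnd ℂ (complexExtension L F) := by
  have hre : Complex.reCLM.compLeftContinuousBounded α (star F) =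
      Complex.reCLM.compLeftContinuousBounded α F := by
    ext x; simp [ContinuousLinearMap.compLeftContinuousBounded_apply]
  have him : Complex.imCLM.compLeftContinuousBounded α (star F) =
      -Complex.imCLM.compLeftContinuousBounded α F := by
    ext x; simp [ContinuousLinearMap.compLeftContinuousBounded_apply]
  simp only [complexExtension_apply, hre, him, map_neg, map_add, map_mul, Complex.conj_ofReal,
    Complex.conj_I, Complex.ofReal_neg]
  ring

theorem complexExtension_nonneg (hLpos : ∀ f : α →ᵇ ℝ, (∀ x, 0 ≤ f x) → 0 ≤ L f)
    {F : α →ᵇ ℂ} (hF : ∀ x, 0 ≤ F x) : 0 ≤ complexExtension L F := by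
  have him : Complex.imCLM.compLeftContinuousBounded α F = 0 := by
    ext x; exact (Complex.nonneg_iff.1 (hF x)).2.symm
  rw [complexExtension_apply, him, map_zero, Complex.ofReal_zero, zero_mul, add_zero]
  exact Complex.zero_le_real.2 (hLpos _ fun x => (Complex.nonneg_iff.1 (hF x)).1)

theorem norm_complexExtension_le (hL1 : L (const α 1) = 1)
    (hLpos : ∀ f : α →ᵇ ℝ, (∀ x, 0 ≤ f x) → 0 ≤ L f) (F : α →ᵇ ℂ) :
    ‖complexExtension L F‖ ≤ 2 * ‖F‖ := by
  have hre : ‖Complex.reCLM.compLeftContinuousBounded α F‖ ≤ ‖F‖ :=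
    (norm_le (norm_nonneg F)).2 fun x => (Complex.abs_re_le_norm (F x)).trans (F.norm_coe_le_norm x)
  have him : ‖Complex.imCLM.compLeftContinuousBounded α F‖ ≤ ‖F‖ :=
    (norm_le (norm_nonneg F)).2 fun x => (Complex.abs_im_le_norm (F x)).trans (F.norm_coe_le_norm x)
  calc ‖complexExtension L F‖
      ≤ |L (Complex.reCLM.compLeftContinuousBounded α F)| +
          |L (Complex.imCLM.compLeftContinuousBounded α F)| := by
        rw [complexExtension_apply]
        refine (norm_add_le _ _).trans_eq ?_
        simp
    _ ≤ 2 * ‖F‖ := by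
        linarith [(abs_map_le_norm_of_nonneg hL1 hLpos _).trans hre,
          (abs_map_le_norm_of_nonneg hL1 hLpos _).trans him]

theorem complexExtension_eq_of_shift {L : (ℕ →ᵇ ℝ) →ₗ[ℝ] ℝ}
    (hLshift : ∀ f g : ℕ →ᵇ ℝ, (∀ n, g n = f (n + 1)) → L g = L f) {F G : ℕ →ᵇ ℂ}
    (hG : ∀ n, G n = F (n + 1)) : complexExtension L G = complexExtension L F := by
  simp only [complexExtension_apply]
  rw [hLshift (Complex.reCLM.compLeftContinuousBounded ℕ F)
      (Complex.reCLM.compLeftContinuousBounded ℕ G) fun n => by simp [hG],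
    hLshift (Complex.imCLM.compLeftContinuousBounded ℕ F)
      (Complex.imCLM.compLeftContinuousBounded ℕ G) fun n => by simp [hG]]

end BoundedContinuousFunction

section Orbit

variable {H : Type*} [NormedAddCommGroup H] [InnerProductSpace ℂ H] {W : H →L[ℂ] H} {C : ℝ}

theorem norm_inner_pow_apply_le (hW : ∀ n : ℕ, ‖W ^ n‖ ≤ C) (h g : H) (n : ℕ) :
    ‖⟪(W ^ n) h, (W ^ n) g⟫_ℂ‖ ≤ C ^ 2 * ‖h‖ * ‖g‖ := by
  have hpow : ∀ x : H, ‖(W ^ n) x‖ ≤ C * ‖x‖ := fun x =>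
    ((W ^ n).le_opNorm x).trans (mul_le_mul_of_nonneg_right (hW n) (norm_nonneg x))
  calc ‖⟪(W ^ n) h, (W ^ n) g⟫_ℂ‖ ≤ ‖(W ^ n) h‖ * ‖(W ^ n) g‖ := norm_inner_le_norm _ _
    _ ≤ (C * ‖h‖) * (C * ‖g‖) :=
        mul_le_mul (hpow h) (hpow g) (norm_nonneg _) ((norm_nonneg _).trans (hpow h))
    _ = C ^ 2 * ‖h‖ * ‖g‖ := by ring

variable (W) in
noncomputable def orbitInner (hW : ∀ n : ℕ, ‖W ^ n‖ ≤ C) : H →ₗ⋆[ℂ] H →ₗ[ℂ] (ℕ →ᵇ ℂ) :=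
  LinearMap.mk₂'ₛₗ (starRingEnd ℂ) (RingHom.id ℂ)
    (fun h g => ofNormedAddCommGroupDiscrete (fun n => ⟪(W ^ n) h, (W ^ n) g⟫_ℂ) _
      (norm_inner_pow_apply_le hW h g))
    (fun h₁ h₂ g => by ext n; simp)
    (fun a h g => by ext n; simp [mul_comm])
    (fun h g₁ g₂ => by ext n; simp)
    (fun a h g => by ext n; simp)

variable (hW : ∀ n : ℕ, ‖W ^ n‖ ≤ C)

@[simp]
theorem orbitInner_apply (h g : H) (n : ℕ) :
    orbitInner W hW h g n = ⟪(W ^ n) h, (W ^ n) g⟫_ℂ :=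
  rfl

theorem orbitInner_swap (h g : H) : orbitInner W hW g h = star (orbitInner W hW h g) := by
  ext n; simp

theorem orbitInner_self_nonneg (h : H) (n : ℕ) : 0 ≤ orbitInner W hW h h n := by
  rw [orbitInner_apply, ← inner_self_ofReal_re]
  exact RCLike.ofReal_nonneg.2 inner_self_nonneg

theorem norm_orbitInner_le (h g : H) : ‖orbitInner W hW h g‖ ≤ C ^ 2 * ‖h‖ * ‖g‖ :=
  norm_ofNormedAddCommGroup_le _ (by positivity) (norm_inner_pow_apply_le hW h g)

theorem orbitInner_apply_apply_succ (h g : H) (n : ℕ) :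
    orbitInner W hW (W h) (W g) n = orbitInner W hW h g (n + 1) := by
  simp [pow_succ]

end Orbit

theorem banach_limit_asymptotic_form_general
    {H : Type*} [NormedAddCommGroup H] [InnerProductSpace ℂ H]
    (W : H →L[ℂ] H) (Cpb : ℝ) (hpb : ∀ n : ℕ, ‖W ^ n‖ ≤ Cpb)
    -- a Banach limit on the bounded (real) sequences:
    (L : (ℕ →ᵇ ℝ) →ₗ[ℝ] ℝ)
    (hL1 : L (BoundedContinuousFunction.const ℕ (1 : ℝ)) = 1)
    (hLpos : ∀ f : ℕ →ᵇ ℝ, (∀ n, 0 ≤ f n) → 0 ≤ L f)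
    (hLshift : ∀ f g : ℕ →ᵇ ℝ, (∀ n, g n = f (n + 1)) → L g = L f)
    -- the bounded sequences of real and imaginary parts of ⟨Wⁿh, Wⁿg⟩:
    (seqre seqim : H → H → (ℕ →ᵇ ℝ))
    (hre : ∀ h g n, seqre h g n = (⟪(W ^ n) h, (W ^ n) g⟫_ℂ).re)
    (him : ∀ h g n, seqim h g n = (⟪(W ^ n) h, (W ^ n) g⟫_ℂ).im)
    -- the form [h,g] = L(re) + i L(im):
    (B : H → H → ℂ)
    (hB : ∀ h g, B h g = (L (seqre h g) : ℂ) + (L (seqim h g) : ℂ) * Complex.I) :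
    -- Hermitian:
    (∀ h g, B g h = starRingEnd ℂ (B h g)) ∧
    -- sesquilinear (conjugate-linear in the first variable, linear in the second):
    (∀ h₁ h₂ g, B (h₁ + h₂) g = B h₁ g + B h₂ g) ∧
    (∀ h g₁ g₂, B h (g₁ + g₂) = B h g₁ + B h g₂) ∧
    (∀ (a : ℂ) h g, B (a • h) g = starRingEnd ℂ a * B h g) ∧
    (∀ (a : ℂ) h g, B h (a • g) = a * B h g) ∧
    -- positive semidefinite:
    (∀ h, (B h h).im = 0 ∧ 0 ≤ (B h h).re) ∧
    -- bounded:
    (∃ C : ℝ, ∀ h g, ‖B h g‖ ≤ C * ‖h‖ * ‖g‖) ∧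
    -- invariance, so that W induces a well-defined isometry on the completion of H/H₀:
    (∀ h g, B (W h) (W g) = B h g) ∧
    (∀ h, B h h = 0 → B (W h) (W h) = 0) := by
  set S := orbitInner W hpb
  set Λ := complexExtension L
  have hBS : ∀ h g, B h g = Λ (S h g) := by
    intro h g
    rw [hB, complexExtension_apply]
    congr 4 <;> ext n <;> simp [hre, him, S]
  have hinv : ∀ h g, B (W h) (W g) = B h g := fun h g => by
    rw [hBS, hBS]
    exact complexExtension_eq_of_shift hLshift (orbitInner_apply_apply_succ hpb h g)
  refine ⟨fun h g => ?_, fun h₁ h₂ g => ?_, fun h g₁ g₂ => ?_, fun a h g => ?_, fun a h g => ?_,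
    fun h => ?_, ⟨2 * Cpb ^ 2, fun h g => ?_⟩, hinv, fun h hh => hinv h h ▸ hh⟩
  · rw [hBS, hBS, orbitInner_swap, complexExtension_star]
  · simp only [hBS, map_add, LinearMap.add_apply]
  · simp only [hBS, map_add]
  · simp only [hBS, LinearMap.map_smulₛₗ₂, map_smul, smul_eq_mul]
  · simp only [hBS, map_smul, smul_eq_mul]
  · obtain ⟨hre_nonneg, him_zero⟩ :=
      Complex.nonneg_iff.1 (complexExtension_nonneg hLpos (orbitInner_self_nonneg hpb h))
    rw [hBS]
    exact ⟨him_zero.symm, hre_nonneg⟩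
  · calc ‖B h g‖ ≤ 2 * ‖S h g‖ := hBS h g ▸ norm_complexExtension_le hL1 hLpos _
      _ ≤ 2 * (Cpb ^ 2 * ‖h‖ * ‖g‖) := by gcongr; exact norm_orbitInner_le hpb h g
      _ = 2 * Cpb ^ 2 * ‖h‖ * ‖g‖ := by ring

/-- For a power bounded operator `W` and a Banach limit `L` on `ℓ^∞(ℕ)`,
the form `[h,g] := L({⟨Wⁿh, Wⁿg⟩}ₙ)` is a bounded positive semidefinite Hermitian
sesquilinear form with `[Wh, Wg] = [h, g]`; consequently `W` induces a well-defined
isometry on (the completion of) `H/H₀` where `H₀ = {h : [h,h] = 0}`. -/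
theorem banach_limit_asymptotic_form
    {H : Type*} [NormedAddCommGroup H] [InnerProductSpace ℂ H] [CompleteSpace H]
    (W : H →L[ℂ] H) (Cpb : ℝ) (hpb : ∀ n : ℕ, ‖W ^ n‖ ≤ Cpb)
    -- a Banach limit on the bounded (real) sequences:
    (L : (ℕ →ᵇ ℝ) →ₗ[ℝ] ℝ)
    (hL1 : L (BoundedContinuousFunction.const ℕ (1 : ℝ)) = 1)
    (hLpos : ∀ f : ℕ →ᵇ ℝ, (∀ n, 0 ≤ f n) → 0 ≤ L f)
    (hLshift : ∀ f g : ℕ →ᵇ ℝ, (∀ n, g n = f (n + 1)) → L g = L f)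
    -- the bounded sequences of real and imaginary parts of ⟨Wⁿh, Wⁿg⟩:
    (seqre seqim : H → H → (ℕ →ᵇ ℝ))
    (hre : ∀ h g n, seqre h g n = (⟪(W ^ n) h, (W ^ n) g⟫_ℂ).re)
    (him : ∀ h g n, seqim h g n = (⟪(W ^ n) h, (W ^ n) g⟫_ℂ).im)
    -- the form [h,g] = L(re) + i L(im):
    (B : H → H → ℂ)
    (hB : ∀ h g, B h g = (L (seqre h g) : ℂ) + (L (seqim h g) : ℂ) * Complex.I) :
    -- Hermitian:
    (∀ h g, B g h = starRingEnd ℂ (B h g)) ∧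
    -- sesquilinear (conjugate-linear in the first variable, linear in the second):
    (∀ h₁ h₂ g, B (h₁ + h₂) g = B h₁ g + B h₂ g) ∧
    (∀ h g₁ g₂, B h (g₁ + g₂) = B h g₁ + B h g₂) ∧
    (∀ (a : ℂ) h g, B (a • h) g = starRingEnd ℂ a * B h g) ∧
    (∀ (a : ℂ) h g, B h (a • g) = a * B h g) ∧
    -- positive semidefinite:
    (∀ h, (B h h).im = 0 ∧ 0 ≤ (B h h).re) ∧
    -- bounded:
    (∃ C : ℝ, ∀ h g, ‖B h g‖ ≤ C * ‖h‖ * ‖g‖) ∧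
    -- invariance, so that W induces a well-defined isometry on the completion of H/H₀:
    (∀ h g, B (W h) (W g) = B h g) ∧
    (∀ h, B h h = 0 → B (W h) (W h) = 0) :=
  banach_limit_asymptotic_form_general W Cpb hpb L hL1 hLpos hLshift seqre seqim hre him B hB
end

section
/- Let W be a contraction on a Hilbert space H. The following are equivalent: (a) W is similar to a unitary operator (there is a bounded invertible Λ with Λ W Λ⁻¹ unitary); (b) W is invertible and sup_{n≥0} ‖W⁻ⁿ‖ < ∞. -/
/-!
For a contraction `W`, `N x = lim ‖Wⁿ x‖` is a `W`-invariant seminorm with `N ≤ ‖·‖`, and if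
`‖W⁻ⁿ‖ ≤ C` then also `‖x‖ ≤ C N x`. By polarization, `N²` is the quadratic form of a bounded
sesquilinear form, the limit of `⟪Wⁿ x, Wⁿ y⟫`, hence `N(x)² = ⟪P x, x⟫` for a positive invertible
operator `P`. Then `Λ = √P` satisfies `‖Λ x‖ = N x`, so `Λ W Λ⁻¹` is unitary. Conversely, if
`W = Λ⁻¹ U Λ` then `W⁻ⁿ = Λ⁻¹ U⁻ⁿ Λ` has norm at most `‖Λ⁻¹‖ ‖Λ‖`.
-/

open Filter Topology ContinuousLinearMap

section Contraction

variable {𝕜 E : Type*} [NontriviallyNormedField 𝕜] [NormedAddCommGroup E] [NormedSpace 𝕜 E]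
  {T : E →L[𝕜] E}

theorem antitone_norm_pow_apply (hT : ‖T‖ ≤ 1) (x : E) : Antitone fun n : ℕ ↦ ‖(T ^ n) x‖ :=
  antitone_nat_of_succ_le fun n ↦ by
    rw [pow_succ', mul_apply_eq_comp]
    exact (T.le_of_opNorm_le hT _).trans_eq (one_mul _)

theorem norm_pow_apply_le (hT : ‖T‖ ≤ 1) (n : ℕ) (x : E) : ‖(T ^ n) x‖ ≤ ‖x‖ := by
  simpa using antitone_norm_pow_apply hT x n.zero_le

theorem norm_pow_le_one (hT : ‖T‖ ≤ 1) (n : ℕ) : ‖T ^ n‖ ≤ 1 :=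
  opNorm_le_bound _ zero_le_one fun x ↦ by simpa using norm_pow_apply_le hT n x

variable (T) in
noncomputable def limNorm (x : E) : ℝ := ⨅ n : ℕ, ‖(T ^ n) x‖

variable (T) in
theorem limNorm_nonneg (x : E) : 0 ≤ limNorm T x :=
  Real.iInf_nonneg fun _ ↦ norm_nonneg _

theorem tendsto_norm_pow_apply_limNorm (hT : ‖T‖ ≤ 1) (x : E) :
    Tendsto (fun n : ℕ ↦ ‖(T ^ n) x‖) atTop (𝓝 (limNorm T x)) :=
  tendsto_atTop_ciInf (antitone_norm_pow_apply hT x) ⟨0, by rintro _ ⟨n, rfl⟩; positivity⟩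

theorem limNorm_apply_self (hT : ‖T‖ ≤ 1) (x : E) : limNorm T (T x) = limNorm T x := by
  refine tendsto_nhds_unique (tendsto_norm_pow_apply_limNorm hT (T x)) ?_
  simpa only [Function.comp_def, pow_succ, mul_apply_eq_comp] using
    (tendsto_norm_pow_apply_limNorm hT x).comp (tendsto_add_atTop_nat 1)

theorem norm_le_mul_limNorm (hT : ‖T‖ ≤ 1) {T' : E →L[𝕜] E} (hT' : T' * T = 1) {C : ℝ}
    (hC : ∀ n, ‖T' ^ n‖ ≤ C) (x : E) : ‖x‖ ≤ C * limNorm T x := by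
  refine ge_of_tendsto ((tendsto_norm_pow_apply_limNorm hT x).const_mul C)
    (Eventually.of_forall fun n ↦ ?_)
  calc ‖x‖ = ‖(T' ^ n) ((T ^ n) x)‖ := by
        rw [← mul_apply_eq_comp, pow_mul_pow_eq_one n hT', one_apply_eq_self]
    _ ≤ ‖T' ^ n‖ * ‖(T ^ n) x‖ := le_opNorm _ _
    _ ≤ C * ‖(T ^ n) x‖ := by gcongr; exact hC n

end Contraction

section Similarity

variable {𝕜 E F : Type*} [NontriviallyNormedField 𝕜] [NormedAddCommGroup E] [NormedSpace 𝕜 E]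
  [NormedAddCommGroup F] [NormedSpace 𝕜 F]

theorem ContinuousLinearEquiv.norm_conjContinuousAlgEquiv_le (Λ : E ≃L[𝕜] F) (A : E →L[𝕜] E) :
    ‖Λ.conjContinuousAlgEquiv A‖ ≤ ‖(Λ : E →L[𝕜] F)‖ * ‖A‖ * ‖(Λ.symm : F →L[𝕜] E)‖ := by
  rw [conjContinuousAlgEquiv_apply, mul_assoc]
  exact (opNorm_comp_le _ _).trans (by gcongr; exact opNorm_comp_le _ _)

theorem exists_inverse_pow_bounded_of_conj_linearIsometryEquiv {W : E →L[𝕜] E}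
    (U : F ≃ₗᵢ[𝕜] F) (Λ : E ≃L[𝕜] F) (h : ∀ x, Λ (W x) = U (Λ x)) :
    ∃ W' : E →L[𝕜] E, W * W' = 1 ∧ W' * W = 1 ∧ ∃ C : ℝ, ∀ n : ℕ, ‖W' ^ n‖ ≤ C := by
  set e := Λ.symm.conjContinuousAlgEquiv
  set V : F →L[𝕜] F := U.symm.toLinearIsometry.toContinuousLinearMap
  have hW : W = e U.toContinuousLinearEquiv := by ext x; simp [e, ← h]
  refine ⟨e V, ?_, ?_, ‖(Λ.symm : F →L[𝕜] E)‖ * ‖(Λ : E →L[𝕜] F)‖, fun n ↦ ?_⟩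
  · rw [hW, ← map_mul, ← map_one e]; congr 1; ext; simp [V]
  · rw [hW, ← map_mul, ← map_one e]; congr 1; ext; simp [V]
  · calc ‖e V ^ n‖ = ‖e (V ^ n)‖ := by rw [map_pow]
      _ ≤ ‖(Λ.symm : F →L[𝕜] E)‖ * ‖V ^ n‖ * ‖(Λ : E →L[𝕜] F)‖ :=
        Λ.symm.norm_conjContinuousAlgEquiv_le _
      _ ≤ ‖(Λ.symm : F →L[𝕜] E)‖ * 1 * ‖(Λ : E →L[𝕜] F)‖ := by
        gcongr; exact norm_pow_le_one (LinearIsometry.norm_toContinuousLinearMap_le _) n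
      _ = _ := by rw [mul_one]

theorem exists_linearIsometryEquiv_of_norm_conj_eq (Λ : E ≃L[𝕜] F) (W : E ≃L[𝕜] E)
    (h : ∀ x, ‖Λ (W x)‖ = ‖Λ x‖) : ∃ U : F ≃ₗᵢ[𝕜] F, ∀ x, Λ (W x) = U (Λ x) :=
  ⟨⟨((Λ.symm.trans W).trans Λ).toLinearEquiv, fun y ↦ by simpa using h (Λ.symm y)⟩,
    fun x ↦ by simp⟩

end Similarity

section BilinearLimit

variable {𝕜 𝕜₂ 𝕜₃ E F G : Type*} [NontriviallyNormedField 𝕜] [NontriviallyNormedField 𝕜₂]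
  [NontriviallyNormedField 𝕜₃] [NormedAddCommGroup E] [NormedAddCommGroup F]
  [NormedAddCommGroup G] [NormedSpace 𝕜 E] [NormedSpace 𝕜₂ F] [NormedSpace 𝕜₃ G]
  {σ₁₃ : 𝕜 →+* 𝕜₃} {σ₂₃ : 𝕜₂ →+* 𝕜₃} [RingHomIsometric σ₂₃]

theorem ContinuousLinearMap.exists_forall_apply_eq_of_tendsto
    {B : ℕ → E →SL[σ₁₃] F →SL[σ₂₃] G} {f : E → F → G} {C : ℝ}
    (hB : ∀ n x y, ‖B n x y‖ ≤ C * ‖x‖ * ‖y‖)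
    (hf : ∀ x y, Tendsto (fun n ↦ B n x y) atTop (𝓝 (f x y))) :
    ∃ L : E →SL[σ₁₃] F →SL[σ₂₃] G, ∀ x y, L x y = f x y := by
  let L₀ : E →ₛₗ[σ₁₃] F →ₛₗ[σ₂₃] G := LinearMap.mk₂'ₛₗ σ₁₃ σ₂₃ f
    (fun x x' y ↦ tendsto_nhds_unique (hf (x + x') y) <|
      ((hf x y).add (hf x' y)).congr fun n ↦ by simp)
    (fun c x y ↦ tendsto_nhds_unique (hf (c • x) y) <|
      ((hf x y).const_smul (σ₁₃ c)).congr fun n ↦ by simp)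
    (fun x y y' ↦ tendsto_nhds_unique (hf x (y + y')) <|
      ((hf x y).add (hf x y')).congr fun n ↦ by simp)
    (fun c x y ↦ tendsto_nhds_unique (hf x (c • y)) <|
      ((hf x y).const_smul (σ₂₃ c)).congr fun n ↦ by simp)
  refine ⟨L₀.mkContinuous₂ C fun x y ↦ ?_, fun x y ↦ rfl⟩
  exact le_of_tendsto (hf x y).norm (Eventually.of_forall fun n ↦ hB n x y)

end BilinearLimit

section Polarization

variable (𝕜 : Type*) {E F : Type*} [RCLike 𝕜] [NormedAddCommGroup E] [NormedAddCommGroup F]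
  [InnerProductSpace 𝕜 E] [InnerProductSpace 𝕜 F]

open RCLike in
noncomputable def polarization (N : E → ℝ) (x y : E) : 𝕜 :=
  ((N (x + y) : 𝕜) ^ 2 - (N (x - y) : 𝕜) ^ 2 +
    ((N (x - (I : 𝕜) • y) : 𝕜) ^ 2 - (N (x + (I : 𝕜) • y) : 𝕜) ^ 2) * I) / 4

variable {𝕜}

theorem tendsto_inner_polarization {A : ℕ → E →ₗ[𝕜] F} {N : E → ℝ}
    (hN : ∀ x, Tendsto (fun n ↦ ‖A n x‖) atTop (𝓝 (N x))) (x y : E) :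
    Tendsto (fun n ↦ inner 𝕜 (A n x) (A n y)) atTop (𝓝 (polarization 𝕜 N x y)) := by
  have hN' (z : E) : Tendsto (fun n ↦ (‖A n z‖ : 𝕜)) atTop (𝓝 (N z : 𝕜)) :=
    (RCLike.continuous_ofReal.tendsto _).comp (hN z)
  refine Tendsto.congr (fun n ↦ ?_) <| ((((hN' _).pow 2).sub ((hN' _).pow 2)).add
    ((((hN' _).pow 2).sub ((hN' _).pow 2)).mul_const RCLike.I)).div_const 4
  rw [inner_eq_sum_norm_sq_div_four]
  simp only [map_add, map_sub, map_smul]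

theorem polarization_self {A : ℕ → E →ₗ[𝕜] F} {N : E → ℝ}
    (hN : ∀ x, Tendsto (fun n ↦ ‖A n x‖) atTop (𝓝 (N x))) (x : E) :
    polarization 𝕜 N x x = (N x : 𝕜) ^ 2 := by
  refine tendsto_nhds_unique (tendsto_inner_polarization hN x x) ?_
  simp_rw [inner_self_eq_norm_sq_to_K]
  exact ((RCLike.continuous_ofReal.tendsto _).comp (hN x)).pow 2

end Polarization

section Hilbert

variable {𝕜 H : Type*} [RCLike 𝕜] [NormedAddCommGroup H] [InnerProductSpace 𝕜 H] [CompleteSpace H]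

theorem exists_inner_self_eq_limNorm_sq {T : H →L[𝕜] H} (hT : ‖T‖ ≤ 1) :
    ∃ P : H →L[𝕜] H, ∀ x, inner 𝕜 (P x) x = (limNorm T x : 𝕜) ^ 2 := by
  have hA := tendsto_norm_pow_apply_limNorm hT
  obtain ⟨L, hL⟩ := exists_forall_apply_eq_of_tendsto
    (B := fun n ↦ (innerSL 𝕜).bilinearComp (T ^ n) (T ^ n)) (C := 1)
    (fun n x y ↦ by
      rw [mul_assoc, one_mul]
      exact (norm_inner_le_norm _ _).trans (by gcongr <;> exact norm_pow_apply_le hT n _))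
    (tendsto_inner_polarization (A := fun n ↦ (T ^ n).toLinearMap) hA)
  refine ⟨InnerProductSpace.continuousLinearMapOfBilin L, fun x ↦ ?_⟩
  rw [InnerProductSpace.continuousLinearMapOfBilin_apply, hL, polarization_self hA]

end Hilbert

section Complex

variable {H : Type*} [NormedAddCommGroup H] [InnerProductSpace ℂ H] [CompleteSpace H]

theorem ContinuousLinearMap.IsPositive.exists_continuousLinearEquiv_norm_sq_eq {P : H →L[ℂ] H}
    (hP : P.IsPositive) (hP' : IsUnit P) :
    ∃ Λ : H ≃L[ℂ] H, ∀ x, ‖Λ x‖ ^ 2 = RCLike.re (inner ℂ (P x) x) := by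
  have hP0 : 0 ≤ P := (nonneg_iff_isPositive P).2 hP
  obtain ⟨R, hR⟩ := (CFC.isUnit_sqrt_iff P hP0).2 hP'
  have hR_adj : adjoint (CFC.sqrt P) = CFC.sqrt P :=
    ((nonneg_iff_isPositive _).1 (CFC.sqrt_nonneg P)).isSelfAdjoint
  refine ⟨.ofUnit R, fun x ↦ ?_⟩
  change ‖(R : H →L[ℂ] H) x‖ ^ 2 = _
  rw [hR, apply_norm_sq_eq_inner_adjoint_left, hR_adj, ← mul_def, CFC.sqrt_mul_sqrt_self P hP0]

theorem exists_continuousLinearEquiv_norm_eq_of_inner_self_eq_sq {P : H →L[ℂ] H} {N : H → ℝ}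
    (hPN : ∀ x, inner ℂ (P x) x = (N x : ℂ) ^ 2) {K : ℝ} (hK : 0 < K)
    (hN : ∀ x, ‖x‖ ≤ K * N x) : ∃ Λ : H ≃L[ℂ] H, ∀ x, ‖Λ x‖ = N x := by
  have hN₀ (x : H) : 0 ≤ N x := nonneg_of_mul_nonneg_right ((norm_nonneg x).trans (hN x)) hK
  have hP_pos : P.IsPositive := (isPositive_iff_complex P).2 fun x ↦ by
    simpa [hPN, ← Complex.ofReal_pow] using sq_nonneg (N x)
  have hP_unit : IsUnit P := by
    refine isUnit_of_forall_le_norm_inner_map P (c := ⟨K⁻¹ ^ 2, by positivity⟩)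
      (by change (0 : ℝ) < _; positivity) fun x ↦ ?_
    change _ * K⁻¹ ^ 2 ≤ _
    rw [hPN, norm_pow, Complex.norm_real, Real.norm_of_nonneg (hN₀ x), ← mul_pow,
      ← div_eq_mul_inv]
    gcongr
    rw [div_le_iff₀ hK, mul_comm]
    exact hN x
  obtain ⟨Λ, hΛ⟩ := hP_pos.exists_continuousLinearEquiv_norm_sq_eq hP_unit
  refine ⟨Λ, fun x ↦ ?_⟩
  rw [← sq_eq_sq₀ (norm_nonneg _) (hN₀ x), hΛ, hPN, ← Complex.ofReal_pow,
    RCLike.re_to_complex, Complex.ofReal_re]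

theorem exists_continuousLinearEquiv_norm_eq_limNorm {T T' : H →L[ℂ] H} (hT : ‖T‖ ≤ 1)
    (hT' : T' * T = 1) {C : ℝ} (hC : ∀ n, ‖T' ^ n‖ ≤ C) :
    ∃ Λ : H ≃L[ℂ] H, ∀ x, ‖Λ x‖ = limNorm T x := by
  obtain ⟨P, hP⟩ := exists_inner_self_eq_limNorm_sq hT
  refine exists_continuousLinearEquiv_norm_eq_of_inner_self_eq_sq hP
    (lt_max_of_lt_right one_pos : 0 < max C 1) fun x ↦ ?_
  exact (norm_le_mul_limNorm hT hT' hC x).trans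
    (by gcongr; exacts [limNorm_nonneg T x, le_max_left _ _])

end Complex

/-- A contraction `W` is similar to a unitary operator iff `W` is invertible
with `sup_{n≥0} ‖W⁻ⁿ‖ < ∞`. -/
theorem contraction_similar_to_unitary_iff
    {H : Type*} [NormedAddCommGroup H] [InnerProductSpace ℂ H] [CompleteSpace H]
    (W : H →L[ℂ] H) (hW : ‖W‖ ≤ 1) :
    (∃ (U : H ≃ₗᵢ[ℂ] H) (Λ : H ≃L[ℂ] H), ∀ x, Λ (W x) = U (Λ x)) ↔
      (∃ W' : H →L[ℂ] H, W * W' = 1 ∧ W' * W = 1 ∧ ∃ C : ℝ, ∀ n : ℕ, ‖W' ^ n‖ ≤ C) := by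
  constructor
  · rintro ⟨U, Λ, h⟩
    exact exists_inverse_pow_bounded_of_conj_linearIsometryEquiv U Λ h
  · rintro ⟨W', hWW', hW'W, C, hC⟩
    obtain ⟨Λ, hΛ⟩ := exists_continuousLinearEquiv_norm_eq_limNorm hW hW'W hC
    obtain ⟨U, hU⟩ := exists_linearIsometryEquiv_of_norm_conj_eq Λ
      (.ofUnit ⟨W, W', hWW', hW'W⟩) fun x ↦ by
        rw [hΛ, hΛ]; exact limNorm_apply_self hW x
    exact ⟨U, Λ, hU⟩
end
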